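/- arXiv:1610.00816 — 6 statements merged into one kernel-verified Lean document; each statement's English description precedes it below -/
import Mathlib

section
/- Let (G,Π,r,i) be a multigroup in the relational (second) sense. Then: (a) r(i)=i; (b) r(r(x))=x for all x∈G; (c) (x,y,z)∈Π if and only if (r(y),r(x),r(z))∈Π; (d) (i,x,y)∈Π if and only if x=y; (e) if there exists q∈G with (v,w,q)∈Π and (u,q,x)∈Π, then there exists p∈G with (u,v,p)∈Π and (p,w,x)∈Π; (f) for all a,b∈G there exists c∈G with (a,b,c)∈Π. -/
/-!
Composing the two symmetries of axiom I yields the anti-automorphism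
`(x, y, z) ↦ (r y, r x, r z)` of `Π`. Applied to the triple `(x, i, x)` given by axiom II,
axiom I also shows that `r` is an involution fixing `i`, so this anti-automorphism is an
involution, and (d) and (e) are axioms II and III transported along it. Finally (f) is axiom III
applied to `(r a, a, i)` and `(i, b, b)`.
-/

universe u

/-- A multigroup in the relational (second) sense: a quadruple `(G, Π, r, i)` where `G` is a
nonempty set, `Π ⊆ G × G × G`, `r : G → G` and `i ∈ G`, satisfying axioms I, II, III. -/
structure Multigroup2 (G : Type u) where
  nonempty : Nonempty G
  Pi : G → G → G → Prop
  r : G → G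
  i : G
  axI : ∀ {x y z}, Pi x y z → Pi z (r y) x ∧ Pi (r x) z y
  axII : ∀ {x y}, Pi x i y ↔ x = y
  axIII : ∀ {u v w x}, (∃ p, Pi u v p ∧ Pi p w x) → ∃ q, Pi v w q ∧ Pi u q x

namespace Multigroup2

variable {G : Type u} (M : Multigroup2 G)

theorem Pi_self_i (x : G) : M.Pi x M.i x :=
  M.axII.mpr rfl

theorem Pi_r_self_i (x : G) : M.Pi (M.r x) x M.i :=
  (M.axI (M.Pi_self_i x)).2

theorem r_i : M.r M.i = M.i :=
  M.axII.mp (M.Pi_r_self_i M.i)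

@[simp]
theorem r_r (x : G) : M.r (M.r x) = x :=
  M.axII.mp (M.axI (M.Pi_r_self_i x)).2

theorem r_involutive : Function.Involutive M.r :=
  M.r_r

theorem Pi_reverse {x y z : G} (h : M.Pi x y z) : M.Pi (M.r y) (M.r x) (M.r z) :=
  (M.axI (M.axI (M.axI h).1).2).1

theorem Pi_iff_Pi_reverse (x y z : G) : M.Pi x y z ↔ M.Pi (M.r y) (M.r x) (M.r z) :=
  ⟨M.Pi_reverse, fun h => by simpa only [r_r] using M.Pi_reverse h⟩

theorem Pi_i_left_iff (x y : G) : M.Pi M.i x y ↔ x = y := by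
  rw [Pi_iff_Pi_reverse, r_i, axII, M.r_involutive.injective.eq_iff]

theorem exists_Pi_assoc_left {u v w x : G} (h : ∃ q, M.Pi v w q ∧ M.Pi u q x) :
    ∃ p, M.Pi u v p ∧ M.Pi p w x := by
  obtain ⟨q, hvw, hux⟩ := h
  obtain ⟨p, hvu, hwx⟩ := M.axIII ⟨M.r q, M.Pi_reverse hvw, M.Pi_reverse hux⟩
  exact ⟨M.r p, by simpa only [r_r] using M.Pi_reverse hvu,
    by simpa only [r_r] using M.Pi_reverse hwx⟩

theorem exists_Pi (a b : G) : ∃ c, M.Pi a b c := by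
  obtain ⟨c, hab, -⟩ := M.axIII ⟨M.i, M.Pi_r_self_i a, (M.Pi_i_left_iff b b).mpr rfl⟩
  exact ⟨c, hab⟩

end Multigroup2

/-- Lemma 1.2: basic properties of a multigroup in the relational sense:
(a) `r(i) = i`; (b) `r(r(x)) = x`; (c) `(x,y,z) ∈ Π ↔ (r(y),r(x),r(z)) ∈ Π`;
(d) `(i,x,y) ∈ Π ↔ x = y`; (e) the reversed associativity condition; and
(f) for all `a, b` there is `c` with `(a,b,c) ∈ Π`. -/
theorem multigroup2_basic_properties {G : Type u} (M : Multigroup2 G) :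
    (M.r M.i = M.i) ∧
    (∀ x, M.r (M.r x) = x) ∧
    (∀ x y z, M.Pi x y z ↔ M.Pi (M.r y) (M.r x) (M.r z)) ∧
    (∀ x y, M.Pi M.i x y ↔ x = y) ∧
    (∀ u v w x, (∃ q, M.Pi v w q ∧ M.Pi u q x) → ∃ p, M.Pi u v p ∧ M.Pi p w x) ∧
    (∀ a b, ∃ c, M.Pi a b c) :=
  ⟨M.r_i, M.r_r, M.Pi_iff_Pi_reverse, M.Pi_i_left_iff, fun _ _ _ _ => M.exists_Pi_assoc_left,
    M.exists_Pi⟩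
end

section
/- In any multifield F, full distributivity holds: (a+b)d = ad+bd for all a,b,d∈F. -/
universe u v w

/-- The data of a multiring: a multivalued addition, a (single-valued) multiplication,
a negation map and constants `0`, `1`. -/
structure MultiringData (R : Type u) where
  add : R → R → Set R
  mul : R → R → R
  neg : R → R
  zero : R
  one : R

/-- `(R,+,·,−,0,1)` is a multiring: `(R,+,−,0)` is a commutative multigroup,
`(R,·,1)` is a commutative monoid, `a·0 = 0`, and `c ∈ a+b → cd ∈ ad+bd`. -/
structure IsMultiring {R : Type u} (A : MultiringData R) : Prop where
  add_nonempty : ∀ a b, (A.add a b).Nonempty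
  add_comm' : ∀ a b, A.add a b = A.add b a
  add_rev : ∀ {a b d}, d ∈ A.add a b → a ∈ A.add d (A.neg b) ∧ b ∈ A.add (A.neg a) d
  zero_add' : ∀ {x y}, y ∈ A.add A.zero x ↔ x = y
  add_assoc' : ∀ a b c, (⋃ t ∈ A.add a b, A.add t c) = ⋃ s ∈ A.add b c, A.add a s
  mul_comm' : ∀ a b, A.mul a b = A.mul b a
  mul_assoc' : ∀ a b c, A.mul (A.mul a b) c = A.mul a (A.mul b c)
  one_mul' : ∀ a, A.mul A.one a = a
  mul_zero' : ∀ a, A.mul a A.zero = A.zero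
  distrib : ∀ (d : R) {a b c : R}, c ∈ A.add a b → A.mul c d ∈ A.add (A.mul a d) (A.mul b d)

/-- A multifield is a multiring in which every nonzero element has a multiplicative
inverse (and `1 ≠ 0`). -/
structure IsMultifield {R : Type u} (A : MultiringData R) extends IsMultiring A : Prop where
  one_ne_zero' : A.one ≠ A.zero
  inv : ∀ a, a ≠ A.zero → ∃ b, A.mul a b = A.one

/-- A real reduced multifield: a multifield with `a³ = a` and `a ∈ 1+1 → a = 1`. -/
def IsRealReducedMultifield {R : Type u} (A : MultiringData R) : Prop :=
  IsMultifield A ∧ (∀ a, A.mul (A.mul a a) a = a) ∧ ∀ a, a ∈ A.add A.one A.one → a = A.one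

/-- A real reduced multiring: `1 ≠ 0`, `a³ = a`, `c ∈ a + ab² → c = a`, and
`c, d ∈ a² + b² → c = d`. -/
def IsRealReducedMultiring {R : Type u} (A : MultiringData R) : Prop :=
  IsMultiring A ∧ A.one ≠ A.zero ∧ (∀ a, A.mul (A.mul a a) a = a) ∧
    (∀ a b c, c ∈ A.add a (A.mul a (A.mul b b)) → c = a) ∧
    (∀ a b c d, c ∈ A.add (A.mul a a) (A.mul b b) → d ∈ A.add (A.mul a a) (A.mul b b) → c = d)

/-- Morphisms of multirings. -/
structure IsMultiringHom {R : Type u} {S : Type v} (A : MultiringData R) (B : MultiringData S)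
    (f : R → S) : Prop where
  map_add : ∀ {a b c}, c ∈ A.add a b → f c ∈ B.add (f a) (f b)
  map_neg : ∀ a, f (A.neg a) = B.neg (f a)
  map_zero : f A.zero = B.zero
  map_mul : ∀ a b, f (A.mul a b) = B.mul (f a) (f b)
  map_one : f A.one = B.one

/-- Isomorphisms of multirings: bijective morphisms whose inverse is again a morphism. -/
def IsMultiringIso {R : Type u} {S : Type v} (A : MultiringData R) (B : MultiringData S)
    (f : R → S) : Prop :=
  IsMultiringHom A B f ∧ Function.Bijective f ∧
    ∀ a b c, f c ∈ B.add (f a) (f b) → c ∈ A.add a b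

/-! For `d ≠ 0` the inclusion `(a+b)d ⊆ ad+bd` given by the multiring axiom is reversed by
applying the same axiom to multiplication by `d⁻¹`; for `d = 0` both sides are `{0}`. -/

namespace IsMultiring

variable {R : Type u} {A : MultiringData R}

theorem image_mul_right_add_subset (hA : IsMultiring A) (a b d : R) :
    (fun x => A.mul x d) '' A.add a b ⊆ A.add (A.mul a d) (A.mul b d) := by
  rintro _ ⟨x, hx, rfl⟩
  exact hA.distrib d hx

theorem zero_add_zero (hA : IsMultiring A) : A.add A.zero A.zero = {A.zero} := by
  ext x
  rw [hA.zero_add', Set.mem_singleton_iff, eq_comm]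

theorem image_mul_zero_add (hA : IsMultiring A) (a b : R) :
    (fun x => A.mul x A.zero) '' A.add a b = A.add (A.mul a A.zero) (A.mul b A.zero) := by
  simp only [hA.mul_zero', hA.zero_add_zero]
  exact (hA.add_nonempty a b).image_const A.zero

theorem mul_mul_cancel_right {d e : R} (hA : IsMultiring A) (he : A.mul d e = A.one) (x : R) :
    A.mul (A.mul x d) e = x := by
  rw [hA.mul_assoc', he, hA.mul_comm', hA.one_mul']

theorem image_mul_right_add_of_mul_eq_one {d e : R} (hA : IsMultiring A) (he : A.mul d e = A.one)
    (a b : R) : (fun x => A.mul x d) '' A.add a b = A.add (A.mul a d) (A.mul b d) := by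
  have he' : A.mul e d = A.one := by rw [hA.mul_comm', he]
  refine (hA.image_mul_right_add_subset a b d).antisymm fun c hc => ⟨A.mul c e, ?_, ?_⟩
  · simpa only [hA.mul_mul_cancel_right he] using hA.distrib e hc
  · exact hA.mul_mul_cancel_right he' c

end IsMultiring

/-- In any multifield `F`, full distributivity holds: `(a+b)d = ad + bd`. -/
theorem multifield_distrib {R : Type u} (A : MultiringData R) (hA : IsMultifield A)
    (a b d : R) :
    (fun x => A.mul x d) '' A.add a b = A.add (A.mul a d) (A.mul b d) := by
  by_cases hd : d = A.zero
  · subst hd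
    exact hA.image_mul_zero_add a b
  · obtain ⟨e, he⟩ := hA.inv d hd
    exact hA.image_mul_right_add_of_mul_eq_one he a b
end

section
/- Let (X,G) be a space of orderings and set M(G)=G∪{0} where 0 is a new element. Define: a·b=0 if a=0 or b=0 and a·b the group product otherwise; −a=(−1)·a; and a+b = {b} if a=0, {a} if b=0, M(G) if a=−b with a≠0, and D(a,b) otherwise, where D(a,b)={c∈G : for each x∈X, c(x)=a(x) or c(x)=b(x)}. Then (M(G),+,·,−,0,1) is a real reduced multifield. -/
universe u v w

/-- `c ∈ D(a,b)` pointwise condition for value sets in a space of orderings: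
for each `x`, `c(x) = a(x)` or `c(x) = b(x)`. -/
def AOSValue {X : Type u} (a b c : X → ℤˣ) : Prop := ∀ x, c x = a x ∨ c x = b x

/-- `(X, G)` is a space of orderings (abstract ordering space): `X` is nonempty, `G` is a
subgroup of `{−1,1}^X` containing the constant `−1` and separating points, satisfying
axioms AX2 and AX3 for the value sets `D(a,b)`. -/
structure IsAOS {X : Type u} (G : Set (X → ℤˣ)) : Prop where
  nonempty : Nonempty X
  one_mem : (fun _ => (1 : ℤˣ)) ∈ G
  mul_mem : ∀ {a b : X → ℤˣ}, a ∈ G → b ∈ G → a * b ∈ G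
  negone_mem : (fun _ => (-1 : ℤˣ)) ∈ G
  separates : ∀ x y : X, x ≠ y → ∃ a ∈ G, a x ≠ a y
  ax2 : ∀ χ : {a : X → ℤˣ // a ∈ G} → ℤˣ,
    (∀ a b : {a : X → ℤˣ // a ∈ G}, χ ⟨a.1 * b.1, mul_mem a.2 b.2⟩ = χ a * χ b) →
    χ ⟨fun _ => (-1 : ℤˣ), negone_mem⟩ = -1 →
    (∀ a b c : {a : X → ℤˣ // a ∈ G}, χ a = 1 → χ b = 1 → AOSValue a.1 b.1 c.1 → χ c = 1) →
    ∃ x : X, ∀ a : {a : X → ℤˣ // a ∈ G}, χ a = a.1 x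
  ax3 : ∀ a b c r t : {a : X → ℤˣ // a ∈ G}, AOSValue a.1 r.1 t.1 → AOSValue b.1 c.1 r.1 →
    ∃ s : {a : X → ℤˣ // a ∈ G}, AOSValue a.1 b.1 s.1 ∧ AOSValue s.1 c.1 t.1

/-- The multiring data `M(G) = G ∪ {0}` associated to a space of orderings `(X,G)`:
`a·b` is the group product extended by `0`, `−a = (−1)·a`, and
`a + b = {b}` if `a = 0`, `{a}` if `b = 0`, `M(G)` if `a = −b ≠ 0`, `D(a,b)` otherwise. -/
def MofAOS {X : Type u} {G : Set (X → ℤˣ)} (h : IsAOS G) :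
    MultiringData (Option {a : X → ℤˣ // a ∈ G}) where
  add a b :=
    {c | (a = none ∧ c = b) ∨ (b = none ∧ c = a) ∨
      (∃ g k : {a : X → ℤˣ // a ∈ G}, a = some g ∧ b = some k ∧ g.1 = -k.1) ∨
      (∃ g k m : {a : X → ℤˣ // a ∈ G}, a = some g ∧ b = some k ∧ g.1 ≠ -k.1 ∧
        c = some m ∧ AOSValue g.1 k.1 m.1)}
  mul a b :=
    match a, b with
    | some g, some k => some ⟨g.1 * k.1, h.mul_mem g.2 k.2⟩
    | _, _ => none
  neg a := a.map fun g => ⟨(fun _ => (-1 : ℤˣ)) * g.1, h.mul_mem h.negone_mem g.2⟩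
  zero := none
  one := some ⟨fun _ => (1 : ℤˣ), h.one_mem⟩

/-! Since every `g ∈ G` takes values `±1`, the membership `c ∈ D(a, b)` is equivalent to
`a ∈ D(c, -b)`, which gives reversibility, and `D(a, b) · d = D(ad, bd)` gives distributivity.
Associativity of `+` is axiom AX3 when all summands are nonzero and no sum of the form
`g + (-g)` (which is all of `M(G)`) occurs; those degenerate sums absorb every other case.
Real reducedness holds because `g² = 1` for every `g ∈ G`, and `D(1, 1) = {1}` with `1 ≠ -1`
as `X` is nonempty. -/

namespace AOSValue

variable {X : Type u} {a b c : X → ℤˣ}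

theorem symm (hc : AOSValue a b c) : AOSValue b a c := fun x => (hc x).symm

theorem left : AOSValue a b a := fun _ => Or.inl rfl

theorem right : AOSValue a b b := fun _ => Or.inr rfl

theorem mul_right (hc : AOSValue a b c) (d : X → ℤˣ) : AOSValue (a * d) (b * d) (c * d) :=
  fun x => (hc x).imp (congrArg (· * d x)) (congrArg (· * d x))

theorem rev (hc : AOSValue a b c) : AOSValue c (-b) a :=
  have key : ∀ p q r : ℤˣ, (r = p ∨ r = q) → p = r ∨ p = -q := by decide
  fun x => key _ _ _ (hc x)

theorem rotate_neg (hc : AOSValue a b (-c)) : AOSValue b c (-a) :=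
  have key : ∀ p q r : ℤˣ, (-r = p ∨ -r = q) → -p = q ∨ -p = r := by decide
  fun x => key _ _ _ (hc x)

end AOSValue

theorem IsAOS.neg_mem {X : Type u} {G : Set (X → ℤˣ)} (h : IsAOS G) {g : X → ℤˣ} (hg : g ∈ G) :
    -g ∈ G :=
  neg_one_mul g ▸ h.mul_mem h.negone_mem hg

namespace MofAOS

variable {X : Type u} {G : Set (X → ℤˣ)} (h : IsAOS G)

theorem mem_add_none_left {b c : Option {a : X → ℤˣ // a ∈ G}} :
    c ∈ (MofAOS h).add none b ↔ c = b := by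
  simp only [MofAOS, Set.mem_ofPred_eq]
  aesop

theorem mem_add_none_right {a c : Option {a : X → ℤˣ // a ∈ G}} :
    c ∈ (MofAOS h).add a none ↔ c = a := by
  simp only [MofAOS, Set.mem_ofPred_eq]
  aesop

theorem mem_add_some_some {g k : {a : X → ℤˣ // a ∈ G}} {c : Option {a : X → ℤˣ // a ∈ G}} :
    c ∈ (MofAOS h).add (some g) (some k) ↔
      g.1 = -k.1 ∨ ∃ m, c = some m ∧ AOSValue g.1 k.1 m.1 := by
  simp only [MofAOS, Set.mem_ofPred_eq]
  by_cases g.1 = -k.1 <;> aesop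

theorem none_mem_add_none : none ∈ (MofAOS h).add none none :=
  (mem_add_none_left h).2 rfl

theorem mem_add_of_eq_neg {g k : {a : X → ℤˣ // a ∈ G}} (hgk : g.1 = -k.1)
    (c : Option {a : X → ℤˣ // a ∈ G}) : c ∈ (MofAOS h).add (some g) (some k) :=
  (mem_add_some_some h).2 (Or.inl hgk)

theorem some_mem_add_of_aosValue {g k m : {a : X → ℤˣ // a ∈ G}} (hm : AOSValue g.1 k.1 m.1) :
    some m ∈ (MofAOS h).add (some g) (some k) :=
  (mem_add_some_some h).2 (Or.inr ⟨m, rfl, hm⟩)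

theorem some_mem_add_left (g : {a : X → ℤˣ // a ∈ G}) (b : Option {a : X → ℤˣ // a ∈ G}) :
    some g ∈ (MofAOS h).add (some g) b := by
  cases b with
  | none => exact (mem_add_none_right h).2 rfl
  | some k => exact some_mem_add_of_aosValue h AOSValue.left

theorem some_mem_add_right (a : Option {a : X → ℤˣ // a ∈ G}) (k : {a : X → ℤˣ // a ∈ G}) :
    some k ∈ (MofAOS h).add a (some k) := by
  cases a with
  | none => exact (mem_add_none_left h).2 rfl
  | some g => exact some_mem_add_of_aosValue h AOSValue.right

theorem add_comm (a b : Option {a : X → ℤˣ // a ∈ G}) :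
    (MofAOS h).add a b = (MofAOS h).add b a := by
  ext c
  cases a <;> cases b
  · rfl
  · rw [mem_add_none_left, mem_add_none_right]
  · rw [mem_add_none_left, mem_add_none_right]
  · rw [mem_add_some_some, mem_add_some_some]
    exact or_congr (eq_comm.trans neg_eq_iff_eq_neg) (exists_congr fun m => and_congr_right fun _ => ⟨.symm, .symm⟩)

theorem neg_some (g : {a : X → ℤˣ // a ∈ G}) :
    (MofAOS h).neg (some g) = some ⟨-g.1, h.neg_mem g.2⟩ :=
  congrArg some (Subtype.ext (neg_one_mul g.1))

theorem mem_add_neg_of_mem_add {a b d : Option {a : X → ℤˣ // a ∈ G}}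
    (hd : d ∈ (MofAOS h).add a b) : a ∈ (MofAOS h).add d ((MofAOS h).neg b) := by
  cases a with
  | none =>
    rw [(mem_add_none_left h).1 hd]
    cases b with
    | none => exact none_mem_add_none h
    | some k => exact neg_some h k ▸ mem_add_of_eq_neg h (neg_neg k.1).symm none
  | some g =>
  cases b with
  | none => exact (mem_add_none_right h).2 ((mem_add_none_right h).1 hd).symm
  | some k =>
  rw [neg_some]
  rcases (mem_add_some_some h).1 hd with hgk | ⟨m, rfl, hm⟩
  · obtain rfl : g = ⟨-k.1, h.neg_mem k.2⟩ := Subtype.ext hgk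
    exact some_mem_add_right h d _
  · exact some_mem_add_of_aosValue h hm.rev

theorem exists_mem_add_of_mem_add_of_mem_add {a b c t u : Option {a : X → ℤˣ // a ∈ G}}
    (ht : t ∈ (MofAOS h).add a b) (hu : u ∈ (MofAOS h).add t c) :
    ∃ s ∈ (MofAOS h).add b c, u ∈ (MofAOS h).add a s := by
  cases a with
  | none => exact ⟨u, (mem_add_none_left h).1 ht ▸ hu, (mem_add_none_left h).2 rfl⟩
  | some g =>
  cases b with
  | none => exact ⟨c, (mem_add_none_left h).2 rfl, (mem_add_none_right h).1 ht ▸ hu⟩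
  | some k =>
  cases c with
  | none => exact ⟨some k, (mem_add_none_right h).2 rfl, (mem_add_none_right h).1 hu ▸ ht⟩
  | some l =>
  rcases (mem_add_some_some h).1 ht with hgk | ⟨m, rfl, hm⟩
  · exact ⟨some k, some_mem_add_left h k _, mem_add_of_eq_neg h hgk u⟩
  rcases (mem_add_some_some h).1 hu with hml | ⟨n, rfl, hn⟩
  · refine ⟨some ⟨-g.1, h.neg_mem g.2⟩, some_mem_add_of_aosValue h ?_,
      mem_add_of_eq_neg h (neg_neg g.1).symm _⟩
    exact AOSValue.rotate_neg (hml ▸ hm)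
  · obtain ⟨s, hs, hns⟩ := h.ax3 l k g m n hn.symm hm.symm
    exact ⟨some s, some_mem_add_of_aosValue h hs.symm, some_mem_add_of_aosValue h hns.symm⟩

theorem add_assoc (a b c : Option {a : X → ℤˣ // a ∈ G}) :
    (⋃ t ∈ (MofAOS h).add a b, (MofAOS h).add t c) =
      ⋃ s ∈ (MofAOS h).add b c, (MofAOS h).add a s := by
  ext u
  simp only [Set.mem_iUnion₂, exists_prop]
  constructor
  · rintro ⟨t, ht, hu⟩
    exact exists_mem_add_of_mem_add_of_mem_add h ht hu
  · rintro ⟨s, hs, hu⟩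
    rw [add_comm] at hs hu
    obtain ⟨t, ht, hu⟩ := exists_mem_add_of_mem_add_of_mem_add h hs hu
    exact ⟨t, add_comm h a b ▸ ht, add_comm h t c ▸ hu⟩


theorem mul_none (a : Option {a : X → ℤˣ // a ∈ G}) : (MofAOS h).mul a none = none := by
  cases a <;> rfl

theorem none_mul (a : Option {a : X → ℤˣ // a ∈ G}) : (MofAOS h).mul none a = none := by
  cases a <;> rfl

theorem mul_comm (a b : Option {a : X → ℤˣ // a ∈ G}) :
    (MofAOS h).mul a b = (MofAOS h).mul b a := by
  cases a <;> cases b <;> try rfl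
  exact congrArg some (Subtype.ext (_root_.mul_comm _ _))

theorem mul_assoc (a b c : Option {a : X → ℤˣ // a ∈ G}) :
    (MofAOS h).mul ((MofAOS h).mul a b) c = (MofAOS h).mul a ((MofAOS h).mul b c) := by
  cases a <;> cases b <;> cases c <;> try rfl
  exact congrArg some (Subtype.ext (_root_.mul_assoc _ _ _))

theorem one_mul (a : Option {a : X → ℤˣ // a ∈ G}) : (MofAOS h).mul (MofAOS h).one a = a := by
  cases a with
  | none => rfl
  | some g => exact congrArg some (Subtype.ext (_root_.one_mul g.1))

theorem mul_mem_add_mul {a b c : Option {a : X → ℤˣ // a ∈ G}} (d : Option {a : X → ℤˣ // a ∈ G})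
    (hc : c ∈ (MofAOS h).add a b) :
    (MofAOS h).mul c d ∈ (MofAOS h).add ((MofAOS h).mul a d) ((MofAOS h).mul b d) := by
  cases d with
  | none => simpa only [mul_none] using none_mem_add_none h
  | some l =>
  cases a with
  | none => simpa only [none_mul, (mem_add_none_left h).1 hc] using (mem_add_none_left h).2 rfl
  | some g =>
  cases b with
  | none => simpa only [none_mul, (mem_add_none_right h).1 hc] using (mem_add_none_right h).2 rfl
  | some k =>
  rcases (mem_add_some_some h).1 hc with hgk | ⟨m, rfl, hm⟩
  · exact mem_add_of_eq_neg h (show g.1 * l.1 = -(k.1 * l.1) by rw [hgk, neg_mul]) _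
  · exact some_mem_add_of_aosValue h (hm.mul_right l.1)

theorem isMultiring : IsMultiring (MofAOS h) where
  add_nonempty a b := by
    cases a with
    | none => exact ⟨b, (mem_add_none_left h).2 rfl⟩
    | some g => exact ⟨some g, some_mem_add_left h g b⟩
  add_comm' := add_comm h
  add_rev {a b d} hd :=
    ⟨mem_add_neg_of_mem_add h hd,
      add_comm h _ _ ▸ mem_add_neg_of_mem_add h (add_comm h a b ▸ hd)⟩
  zero_add' := (mem_add_none_left h).trans eq_comm
  add_assoc' := add_assoc h
  mul_comm' := mul_comm h
  mul_assoc' := mul_assoc h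
  one_mul' := one_mul h
  mul_zero' := mul_none h
  distrib d _ _ _ hc := mul_mem_add_mul h d hc

theorem mul_self (g : {a : X → ℤˣ // a ∈ G}) : (MofAOS h).mul (some g) (some g) = (MofAOS h).one :=
  congrArg some (Subtype.ext (funext fun x => Int.units_mul_self (g.1 x)))

theorem isMultifield : IsMultifield (MofAOS h) where
  toIsMultiring := isMultiring h
  one_ne_zero' := Option.some_ne_none _
  inv a ha := by
    obtain ⟨g, rfl⟩ := Option.ne_none_iff_exists'.1 ha
    exact ⟨some g, mul_self h g⟩

theorem mul_mul_self_eq (a : Option {a : X → ℤˣ // a ∈ G}) :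
    (MofAOS h).mul ((MofAOS h).mul a a) a = a := by
  cases a with
  | none => rfl
  | some g => rw [mul_self, one_mul]

theorem eq_one_of_mem_one_add_one {a : Option {a : X → ℤˣ // a ∈ G}}
    (ha : a ∈ (MofAOS h).add (MofAOS h).one (MofAOS h).one) : a = (MofAOS h).one := by
  rcases (mem_add_some_some h).1 ha with h1 | ⟨m, rfl, hm⟩
  · obtain ⟨x⟩ := h.nonempty
    exact absurd (congrFun h1 x) (by decide : (1 : ℤˣ) ≠ -1)
  · exact congrArg some (Subtype.ext (funext fun x => (hm x).elim id id))

end MofAOS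

/-- For a space of orderings `(X,G)`, the structure `M(G) = G ∪ {0}` is a real reduced
multifield. -/
theorem aos_to_real_reduced_multifield {X : Type u} (G : Set (X → ℤˣ)) (h : IsAOS G) :
    IsRealReducedMultifield (MofAOS h) :=
  ⟨MofAOS.isMultifield h, MofAOS.mul_mul_self_eq h, fun _ => MofAOS.eq_one_of_mem_one_add_one h⟩
end

section
/- Let F be a real reduced multifield, χ(F)={σ∈{−1,1}^{F∖{0}} : σ(ab)=σ(a)σ(b)}, X={x∈χ(F) : x(−1)=−1 and a,b∈ker(x) ⟹ (a+b)∖{0}⊆ker(x)} (where ker(x)={f : x(f)=1}), and G={σ∈{−1,1}^X : there exists f∈F∖{0} with σ(x)=x(f) for all x∈X}. Then the map A:X→Sper(F) sending x to the morphism x':F→Q₂ with x'(f)=x(f) for f≠0 and x'(0)=0 is a bijection, and the map B:G→F∖{0} sending σ to the unique f with σ(x)=x(f) for all x∈X is a bijection. -/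
universe u v w

/-- The multivalued sum of the multifield `Q₂ = {−1,0,1}`. -/
def q2add : SignType → SignType → Set SignType
  | SignType.zero, x => {x}
  | x, SignType.zero => {x}
  | SignType.pos, SignType.pos => {SignType.pos}
  | SignType.neg, SignType.neg => {SignType.neg}
  | _, _ => Set.univ

/-- The multifield `Q₂ = {−1,0,1}` with the usual product and multivalued sum
`0+x={x}`, `1+1={1}`, `(−1)+(−1)={−1}`, `1+(−1)={−1,0,1}`. -/
def Q2 : MultiringData SignType where
  add := q2add
  mul := (· * ·)
  neg := (- ·)
  zero := 0
  one := 1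
/-- The set of orderings of a multiring/multifield `A`, identified with the multiring
morphisms `A → Q₂`. -/
def SperSet {R : Type u} (A : MultiringData R) : Set (R → SignType) :=
  {σ | IsMultiringHom A Q2 σ}

/-- Conversion `{−1,1} → {−1,0,1}`. -/
def unitToSign (u : ℤˣ) : SignType := if u = 1 then 1 else -1

/-- `ker(σ) = {f ≠ 0 : σ(f) = 1}`. -/
def kerSet {R : Type u} (A : MultiringData R) (σ : R → ℤˣ) : Set R :=
  {f | f ≠ A.zero ∧ σ f = 1}

/-- The character group `χ(F)`: functions `σ : F∖{0} → {−1,1}` with `σ(ab) = σ(a)σ(b)`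
(normalised by `σ(0) = 1` on the irrelevant value `0`). -/
def chiSet {R : Type u} (A : MultiringData R) : Set (R → ℤˣ) :=
  {σ | σ A.zero = 1 ∧ ∀ a b, a ≠ A.zero → b ≠ A.zero → σ (A.mul a b) = σ a * σ b}

/-- `X = {x ∈ χ(F) : x(−1) = −1 and a,b ∈ ker(x) ⟹ (a+b)∖{0} ⊆ ker(x)}`. -/
def XSet {R : Type u} (A : MultiringData R) : Set (R → ℤˣ) :=
  {σ | σ ∈ chiSet A ∧ σ (A.neg A.one) = -1 ∧
    ∀ a b, a ∈ kerSet A σ → b ∈ kerSet A σ →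
      ∀ c ∈ A.add a b, c ≠ A.zero → c ∈ kerSet A σ}

/-- `G = {σ ∈ {−1,1}^X : ∃ f ∈ F∖{0}, σ(x) = x(f) for all x ∈ X}`. -/
def GSet {R : Type u} (A : MultiringData R) : Set ({σ : R → ℤˣ // σ ∈ XSet A} → ℤˣ) :=
  {τ | ∃ f, f ≠ A.zero ∧ ∀ x : {σ : R → ℤˣ // σ ∈ XSet A}, τ x = x.1 f}

open Classical in
/-- The map `A : X → Sper(F)`, sending `x` to `x' : F → Q₂` with `x'(f) = x(f)` for `f ≠ 0`
and `x'(0) = 0`. -/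
noncomputable def AmapX {R : Type u} (A : MultiringData R) (σ : R → ℤˣ) : R → SignType :=
  fun f => if f = A.zero then 0 else unitToSign (σ f)


/-!
A character `x ∈ X` is the same thing as an ordering: `ker x ∪ {0}` is a positive cone, and the
conditions defining `X` are exactly what makes `x'` preserve the multivalued sum of `Q₂`; the
inverse map reads a morphism `F → Q₂` as a sign character. For the second bijection the only
issue is injectivity, i.e. that `X` separates `F ∖ {0}`: given `f ≠ 0, 1` one needs an ordering
in which `f` is negative. Since nonzero squares equal `1`, the set `{1}` is a preordering, and
adjoining `b` with `-b ∉ T` (the nonzero part of `T₀ + T₀ b`, `T₀ = T ∪ {0}`) stays a preordering;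
so `-f` lies in some preordering, and a Zorn-maximal one above it is total.
-/

variable {R : Type u} {A : MultiringData R}

namespace IsMultiring

theorem self_mem_zero_add (hR : IsMultiring A) (a : R) : a ∈ A.add A.zero a :=
  hR.zero_add'.mpr rfl

theorem eq_of_mem_add_zero (hR : IsMultiring A) {a c : R} (hc : c ∈ A.add a A.zero) : c = a :=
  (hR.zero_add'.mp (hR.add_comm' a A.zero ▸ hc)).symm

theorem zero_mem_add_neg (hR : IsMultiring A) (a : R) : A.zero ∈ A.add a (A.neg a) :=
  (hR.add_rev (hR.self_mem_zero_add a)).1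

theorem eq_neg_of_zero_mem_add (hR : IsMultiring A) {a b : R} (h : A.zero ∈ A.add a b) :
    b = A.neg a :=
  hR.eq_of_mem_add_zero (hR.add_rev h).2

theorem neg_zero (hR : IsMultiring A) : A.neg A.zero = A.zero :=
  (hR.eq_neg_of_zero_mem_add (hR.self_mem_zero_add A.zero)).symm

theorem neg_neg (hR : IsMultiring A) (a : R) : A.neg (A.neg a) = a :=
  (hR.eq_neg_of_zero_mem_add (hR.add_comm' a _ ▸ hR.zero_mem_add_neg a)).symm

theorem neg_ne_zero (hR : IsMultiring A) {a : R} (ha : a ≠ A.zero) : A.neg a ≠ A.zero :=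
  fun h => ha (by rw [← hR.neg_neg a, h, hR.neg_zero])

theorem mul_one' (hR : IsMultiring A) (a : R) : A.mul a A.one = a := by
  rw [hR.mul_comm', hR.one_mul']

theorem zero_mul' (hR : IsMultiring A) (a : R) : A.mul A.zero a = A.zero := by
  rw [hR.mul_comm', hR.mul_zero']

theorem mul_right_comm' (hR : IsMultiring A) (a b c : R) :
    A.mul (A.mul a b) c = A.mul (A.mul a c) b := by
  rw [hR.mul_assoc', hR.mul_comm' b, ← hR.mul_assoc']

theorem mul_mul_mul_comm' (hR : IsMultiring A) (a b c d : R) :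
    A.mul (A.mul a b) (A.mul c d) = A.mul (A.mul a c) (A.mul b d) := by
  rw [← hR.mul_assoc', hR.mul_right_comm' a b c, hR.mul_assoc']

theorem mul_neg_one (hR : IsMultiring A) (a : R) : A.mul a (A.neg A.one) = A.neg a := by
  have h := hR.distrib a (hR.zero_mem_add_neg A.one)
  rw [hR.zero_mul', hR.one_mul', hR.mul_comm'] at h
  exact hR.eq_neg_of_zero_mem_add h

theorem mul_neg (hR : IsMultiring A) (a b : R) : A.mul a (A.neg b) = A.neg (A.mul a b) := by
  rw [← hR.mul_neg_one b, ← hR.mul_assoc', hR.mul_neg_one]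

theorem neg_mul (hR : IsMultiring A) (a b : R) : A.mul (A.neg a) b = A.neg (A.mul a b) := by
  rw [hR.mul_comm', hR.mul_neg, hR.mul_comm']

theorem neg_mem_add_neg (hR : IsMultiring A) {a b c : R} (hc : c ∈ A.add a b) :
    A.neg c ∈ A.add (A.neg a) (A.neg b) := by
  simpa only [hR.mul_neg_one] using hR.distrib (A.neg A.one) hc

theorem exists_add_add_add_comm (hR : IsMultiring A) {a b x y c d e : R}
    (hc : c ∈ A.add a b) (hd : d ∈ A.add x y) (he : e ∈ A.add c d) :
    ∃ m ∈ A.add a x, ∃ n ∈ A.add b y, e ∈ A.add m n := by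
  have assoc {a b c d e : R} (hd : d ∈ A.add a b) (he : e ∈ A.add d c) :
      ∃ s ∈ A.add b c, e ∈ A.add a s := by
    have h := Set.mem_biUnion (t := fun t => A.add t c) hd he
    rw [hR.add_assoc'] at h
    simpa using h
  have assoc' {a b c d e : R} (hd : d ∈ A.add b c) (he : e ∈ A.add a d) :
      ∃ s ∈ A.add a b, e ∈ A.add s c := by
    have h := Set.mem_biUnion (t := fun s => A.add a s) hd he
    rw [← hR.add_assoc'] at h
    simpa using h
  obtain ⟨s, hs, hes⟩ := assoc hc he
  obtain ⟨n, hn, hsn⟩ := assoc hd (hR.add_comm' b d ▸ hs)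
  obtain ⟨m, hm, hemn⟩ := assoc' hsn hes
  exact ⟨m, hm, n, hR.add_comm' y b ▸ hn, hemn⟩

end IsMultiring

namespace IsMultifield

theorem mul_ne_zero (hF : IsMultifield A) {a b : R} (ha : a ≠ A.zero) (hb : b ≠ A.zero) :
    A.mul a b ≠ A.zero := by
  obtain ⟨a', ha'⟩ := hF.inv a ha
  intro hab
  apply hb
  calc b = A.mul (A.mul a a') b := by rw [ha', hF.one_mul']
    _ = A.mul a' (A.mul a b) := by rw [hF.mul_comm' a, hF.mul_assoc']
    _ = A.zero := by rw [hab, hF.mul_zero']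

theorem neg_one_ne_zero (hF : IsMultifield A) : A.neg A.one ≠ A.zero :=
  hF.neg_ne_zero hF.one_ne_zero'

end IsMultifield

namespace IsRealReducedMultifield

theorem mul_self_eq_one (hA : IsRealReducedMultifield A) {a : R} (ha : a ≠ A.zero) :
    A.mul a a = A.one := by
  obtain ⟨b, hb⟩ := hA.1.inv a ha
  calc A.mul a a = A.mul (A.mul (A.mul a a) a) b := by
        rw [hA.1.mul_assoc', hb, hA.1.mul_one']
    _ = A.one := by rw [hA.2.1, hb]

theorem neg_one_ne_one (hA : IsRealReducedMultifield A) : A.neg A.one ≠ A.one := by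
  intro h
  have h0 := hA.1.zero_mem_add_neg A.one
  rw [h] at h0
  exact hA.1.one_ne_zero' (hA.2.2 _ h0).symm

theorem mul_mul_cancel_left (hA : IsRealReducedMultifield A) {a : R} (ha : a ≠ A.zero) (b : R) :
    A.mul a (A.mul a b) = b := by
  rw [← hA.1.mul_assoc', hA.mul_self_eq_one ha, hA.1.one_mul']

theorem exists_mem_add_of_mem_mul_add_mul (hA : IsRealReducedMultifield A) {a b c e : R}
    (hc : c ≠ A.zero) (he : e ∈ A.add (A.mul a c) (A.mul b c)) :
    ∃ d ∈ A.add a b, e = A.mul d c := by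
  have hR := hA.1.toIsMultiring
  refine ⟨A.mul e c, ?_, ?_⟩
  · simpa only [hR.mul_assoc', hA.mul_self_eq_one hc, hR.mul_one'] using hR.distrib c he
  · rw [hR.mul_assoc', hA.mul_self_eq_one hc, hR.mul_one']

end IsRealReducedMultifield

/-- Preorderings are stored without `0`: `T` stands for `P ∖ {0}`. -/
structure IsPreordering (A : MultiringData R) (T : Set R) : Prop where
  one_mem : A.one ∈ T
  zero_notMem : A.zero ∉ T
  neg_one_notMem : A.neg A.one ∉ T
  mul_mem : ∀ {a b}, a ∈ T → b ∈ T → A.mul a b ∈ T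
  add_mem : ∀ {a b c}, a ∈ T → b ∈ T → c ∈ A.add a b → c ≠ A.zero → c ∈ T

def extendBy (A : MultiringData R) (T : Set R) (b : R) : Set R :=
  {c | c ≠ A.zero ∧ ∃ t ∈ insert A.zero T, ∃ s ∈ insert A.zero T, c ∈ A.add t (A.mul s b)}

theorem isPreordering_singleton_one (hA : IsRealReducedMultifield A) :
    IsPreordering A {A.one} where
  one_mem := rfl
  zero_notMem h := hA.1.one_ne_zero' h.symm
  neg_one_notMem := hA.neg_one_ne_one
  mul_mem ha hb := by rw [ha, hb, hA.1.one_mul']; rfl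
  add_mem ha hb hc _ := by rw [ha, hb] at hc; exact hA.2.2 _ hc

theorem isPreordering_sUnion {C : Set (Set R)} (hC : ∀ T ∈ C, IsPreordering A T)
    (hchain : IsChain (· ⊆ ·) C) (hne : C.Nonempty) : IsPreordering A (⋃₀ C) where
  one_mem := let ⟨T, hT⟩ := hne; ⟨T, hT, (hC T hT).one_mem⟩
  zero_notMem := fun ⟨T, hT, h⟩ => (hC T hT).zero_notMem h
  neg_one_notMem := fun ⟨T, hT, h⟩ => (hC T hT).neg_one_notMem h
  mul_mem := by
    rintro a b ⟨Ta, hTa, ha⟩ ⟨Tb, hTb, hb⟩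
    rcases hchain.total hTa hTb with h | h
    · exact ⟨Tb, hTb, (hC Tb hTb).mul_mem (h ha) hb⟩
    · exact ⟨Ta, hTa, (hC Ta hTa).mul_mem ha (h hb)⟩
  add_mem := by
    rintro a b c ⟨Ta, hTa, ha⟩ ⟨Tb, hTb, hb⟩ hc hc0
    rcases hchain.total hTa hTb with h | h
    · exact ⟨Tb, hTb, (hC Tb hTb).add_mem (h ha) hb hc hc0⟩
    · exact ⟨Ta, hTa, (hC Ta hTa).add_mem ha (h hb) hc hc0⟩

namespace IsPreordering

variable {T M : Set R}

theorem ne_zero (hT : IsPreordering A T) {a : R} (ha : a ∈ T) : a ≠ A.zero :=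
  fun h => hT.zero_notMem (h ▸ ha)

theorem mul_mem_insert_zero (hT : IsPreordering A T) (hR : IsMultiring A) {a b : R}
    (ha : a ∈ insert A.zero T) (hb : b ∈ insert A.zero T) : A.mul a b ∈ insert A.zero T := by
  rcases ha with rfl | ha
  · exact Or.inl (hR.zero_mul' b)
  rcases hb with rfl | hb
  · exact Or.inl (hR.mul_zero' a)
  exact Or.inr (hT.mul_mem ha hb)

theorem add_mem_insert_zero (hT : IsPreordering A T) (hR : IsMultiring A) {a b c : R}
    (ha : a ∈ insert A.zero T) (hb : b ∈ insert A.zero T) (hc : c ∈ A.add a b) :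
    c ∈ insert A.zero T := by
  rcases ha with rfl | ha
  · exact hR.zero_add'.mp hc ▸ hb
  rcases hb with rfl | hb
  · exact hR.eq_of_mem_add_zero hc ▸ Or.inr ha
  by_cases hc0 : c = A.zero
  · exact Or.inl hc0
  · exact Or.inr (hT.add_mem ha hb hc hc0)

theorem neg_notMem (hT : IsPreordering A T) (hA : IsRealReducedMultifield A) {a : R}
    (ha : a ∈ T) : A.neg a ∉ T := fun hna => hT.neg_one_notMem <| by
  simpa only [hA.1.mul_neg, hA.mul_self_eq_one (hT.ne_zero ha)] using hT.mul_mem ha hna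

theorem mul_mem_iff_of_mem (hT : IsPreordering A T) (hA : IsRealReducedMultifield A) {a b : R}
    (ha : a ∈ T) : A.mul a b ∈ T ↔ b ∈ T :=
  ⟨fun h => hA.mul_mul_cancel_left (hT.ne_zero ha) b ▸ hT.mul_mem ha h, hT.mul_mem ha⟩

theorem subset_extendBy (hT : IsPreordering A T) (hR : IsMultiring A) (b : R) :
    T ⊆ extendBy A T b := fun c hc =>
  ⟨hT.ne_zero hc, c, Or.inr hc, A.zero, Or.inl rfl, by
    rw [hR.zero_mul', hR.add_comm']; exact hR.self_mem_zero_add c⟩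

theorem mem_extendBy_self (hT : IsPreordering A T) (hR : IsMultiring A) {b : R}
    (hb : b ≠ A.zero) : b ∈ extendBy A T b :=
  ⟨hb, A.zero, Or.inl rfl, A.one, Or.inr hT.one_mem, by
    rw [hR.one_mul']; exact hR.self_mem_zero_add b⟩

theorem add_mem_extendBy (hT : IsPreordering A T) (hA : IsRealReducedMultifield A) {b : R}
    (hb : b ≠ A.zero) {c c' e : R} (hc : c ∈ extendBy A T b) (hc' : c' ∈ extendBy A T b)
    (he : e ∈ A.add c c') (he0 : e ≠ A.zero) : e ∈ extendBy A T b := by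
  have hR := hA.1.toIsMultiring
  obtain ⟨-, t, ht, s, hs, hcts⟩ := hc
  obtain ⟨-, t', ht', s', hs', hcts'⟩ := hc'
  obtain ⟨m, hm, n, hn, hemn⟩ := hR.exists_add_add_add_comm hcts hcts' he
  obtain ⟨w, hw, rfl⟩ := hA.exists_mem_add_of_mem_mul_add_mul hb hn
  exact ⟨he0, m, hT.add_mem_insert_zero hR ht ht' hm, w, hT.add_mem_insert_zero hR hs hs' hw,
    hemn⟩

theorem mul_mem_extendBy (hT : IsPreordering A T) (hA : IsRealReducedMultifield A) {b : R}
    (hb : b ≠ A.zero) {c c' : R} (hc : c ∈ extendBy A T b) (hc' : c' ∈ extendBy A T b) :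
    A.mul c c' ∈ extendBy A T b := by
  have hR := hA.1.toIsMultiring
  obtain ⟨hc0, t, ht, s, hs, hcts⟩ := hc
  obtain ⟨hc0', t', ht', s', hs', hcts'⟩ := hc'
  -- `(t + s b)(t' + s' b) = (t t' + s' s) + (s' t + s t') b`, using `b² = 1`
  have he := hR.distrib c' hcts
  have hp : A.mul t c' ∈ A.add (A.mul t t') (A.mul (A.mul s' t) b) := by
    have h := hR.distrib t hcts'
    rwa [hR.mul_comm' c' t, hR.mul_comm' t' t, hR.mul_right_comm' s' b t] at h
  have hq : A.mul (A.mul s b) c' ∈ A.add (A.mul s' s) (A.mul (A.mul s t') b) := by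
    have h := hR.distrib (A.mul s b) hcts'
    rw [hR.mul_mul_mul_comm', hA.mul_self_eq_one hb, hR.mul_one', ← hR.mul_assoc',
      hR.mul_comm' t' s, hR.add_comm'] at h
    rwa [hR.mul_comm' (A.mul s b)]
  obtain ⟨m, hm, n, hn, hemn⟩ := hR.exists_add_add_add_comm hp hq he
  obtain ⟨w, hw, rfl⟩ := hA.exists_mem_add_of_mem_mul_add_mul hb hn
  refine ⟨hA.1.mul_ne_zero hc0 hc0', m, ?_, w, ?_, hemn⟩
  · exact hT.add_mem_insert_zero hR (hT.mul_mem_insert_zero hR ht ht')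
      (hT.mul_mem_insert_zero hR hs' hs) hm
  · exact hT.add_mem_insert_zero hR (hT.mul_mem_insert_zero hR hs' ht)
      (hT.mul_mem_insert_zero hR hs ht') hw

theorem neg_one_notMem_extendBy (hT : IsPreordering A T) (hA : IsRealReducedMultifield A)
    {b : R} (hb : b ≠ A.zero) (hnb : A.neg b ∉ T) : A.neg A.one ∉ extendBy A T b := by
  have hR := hA.1.toIsMultiring
  rintro ⟨-, t, ht, s, hs, hts⟩
  rcases hs with rfl | hs
  · rw [hR.zero_mul', hR.add_comm'] at hts
    rcases hR.zero_add'.mp hts ▸ ht with h | h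
    · exact hA.1.neg_one_ne_zero h
    · exact hT.neg_one_notMem h
  · -- `-1 ∈ t + s b` gives `-(s b) ∈ t + 1 ⊆ T₀`, hence `-b = s · (-(s b)) ∈ T`
    have hsb : A.neg (A.mul s b) ∈ A.add t A.one := by
      simpa only [hR.neg_neg] using hR.neg_mem_add_neg (hR.add_rev hts).2
    have hsbT : A.neg (A.mul s b) ∈ T :=
      (hT.add_mem_insert_zero hR ht (Or.inr hT.one_mem) hsb).resolve_left
        (hR.neg_ne_zero (hA.1.mul_ne_zero (hT.ne_zero hs) hb))
    apply hnb
    simpa only [hR.mul_neg, hA.mul_mul_cancel_left (hT.ne_zero hs)] using hT.mul_mem hs hsbT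

theorem isPreordering_extendBy (hT : IsPreordering A T) (hA : IsRealReducedMultifield A) {b : R}
    (hb : b ≠ A.zero) (hnb : A.neg b ∉ T) : IsPreordering A (extendBy A T b) where
  one_mem := hT.subset_extendBy hA.1.toIsMultiring b hT.one_mem
  zero_notMem h := h.1 rfl
  neg_one_notMem := hT.neg_one_notMem_extendBy hA hb hnb
  mul_mem := hT.mul_mem_extendBy hA hb
  add_mem := hT.add_mem_extendBy hA hb

theorem exists_maximal_superset (hT : IsPreordering A T) :
    ∃ M, T ⊆ M ∧ Maximal (IsPreordering A) M :=
  zorn_subset_nonempty {T | IsPreordering A T}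
    (fun C hC hchain hne => ⟨⋃₀ C, isPreordering_sUnion hC hchain hne,
      fun _ => Set.subset_sUnion_of_mem⟩) T hT

theorem exists_maximal_mem (hT : IsPreordering A T) (hA : IsRealReducedMultifield A) {b : R}
    (hb : b ≠ A.zero) (hnb : A.neg b ∉ T) : ∃ M, Maximal (IsPreordering A) M ∧ b ∈ M := by
  obtain ⟨M, hTM, hM⟩ := (hT.isPreordering_extendBy hA hb hnb).exists_maximal_superset
  exact ⟨M, hM, hTM (hT.mem_extendBy_self hA.1.toIsMultiring hb)⟩

theorem mem_or_neg_mem_of_maximal (hA : IsRealReducedMultifield A)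
    (hM : Maximal (IsPreordering A) M) {a : R} (ha : a ≠ A.zero) : a ∈ M ∨ A.neg a ∈ M := by
  have hR := hA.1.toIsMultiring
  refine or_iff_not_imp_right.mpr fun hna => ?_
  exact hM.2 (hM.1.isPreordering_extendBy hA ha hna) (hM.1.subset_extendBy hR a)
    (hM.1.mem_extendBy_self hR ha)

theorem mem_iff_neg_notMem_of_maximal (hA : IsRealReducedMultifield A)
    (hM : Maximal (IsPreordering A) M) {a : R} (ha : a ≠ A.zero) : a ∈ M ↔ A.neg a ∉ M :=
  ⟨hM.1.neg_notMem hA, (mem_or_neg_mem_of_maximal hA hM ha).resolve_right⟩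

theorem mul_mem_iff_of_maximal (hA : IsRealReducedMultifield A)
    (hM : Maximal (IsPreordering A) M) {a b : R} (ha : a ≠ A.zero) (hb : b ≠ A.zero) :
    A.mul a b ∈ M ↔ (a ∈ M ↔ b ∈ M) := by
  have hR := hA.1.toIsMultiring
  rcases mem_or_neg_mem_of_maximal hA hM ha with haM | hnaM
  · simp only [hM.1.mul_mem_iff_of_mem hA haM, haM, true_iff]
  · have haM : a ∉ M := hR.neg_neg a ▸ hM.1.neg_notMem hA hnaM
    rw [mem_iff_neg_notMem_of_maximal hA hM (hA.1.mul_ne_zero ha hb), ← hR.neg_mul,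
      hM.1.mul_mem_iff_of_mem hA hnaM]
    tauto

end IsPreordering

theorem Int.units_eq_mul_iff (u v w : ℤˣ) : u = v * w ↔ (u = 1 ↔ (v = 1 ↔ w = 1)) := by
  rcases Int.units_eq_one_or u with rfl | rfl <;> rcases Int.units_eq_one_or v with rfl | rfl <;>
    rcases Int.units_eq_one_or w with rfl | rfl <;> decide

open Classical in
noncomputable def orderingChar (A : MultiringData R) (M : Set R) : R → ℤˣ :=
  fun f => if f = A.zero ∨ f ∈ M then 1 else -1

theorem orderingChar_eq_one_iff {M : Set R} {f : R} (hf : f ≠ A.zero) :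
    orderingChar A M f = 1 ↔ f ∈ M := by
  simp [orderingChar, hf]

theorem orderingChar_mem_xSet (hA : IsRealReducedMultifield A) {M : Set R}
    (hM : Maximal (IsPreordering A) M) : orderingChar A M ∈ XSet A := by
  refine ⟨⟨if_pos (Or.inl rfl), fun a b ha hb => ?_⟩, ?_, ?_⟩
  · rw [Int.units_eq_mul_iff, orderingChar_eq_one_iff (hA.1.mul_ne_zero ha hb),
      orderingChar_eq_one_iff ha, orderingChar_eq_one_iff hb,
      IsPreordering.mul_mem_iff_of_maximal hA hM ha hb]
  · exact if_neg (not_or.mpr ⟨hA.1.neg_one_ne_zero, hM.1.neg_one_notMem⟩)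
  · rintro a b ⟨ha0, ha⟩ ⟨hb0, hb⟩ c hc hc0
    rw [orderingChar_eq_one_iff ha0] at ha
    rw [orderingChar_eq_one_iff hb0] at hb
    exact ⟨hc0, (orderingChar_eq_one_iff hc0).mpr (hM.1.add_mem ha hb hc hc0)⟩

theorem exists_mem_xSet_apply_eq_neg_one (hA : IsRealReducedMultifield A) {a : R}
    (ha0 : a ≠ A.zero) (ha1 : a ≠ A.one) : ∃ x ∈ XSet A, x a = -1 := by
  have hR := hA.1.toIsMultiring
  obtain ⟨M, hM, hnaM⟩ := (isPreordering_singleton_one hA).exists_maximal_mem hA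
    (hR.neg_ne_zero ha0) (by rwa [hR.neg_neg])
  have haM : a ∉ M := hR.neg_neg a ▸ hM.1.neg_notMem hA hnaM
  exact ⟨orderingChar A M, orderingChar_mem_xSet hA hM, if_neg (not_or.mpr ⟨ha0, haM⟩)⟩

theorem eq_of_forall_mem_xSet_apply_eq (hA : IsRealReducedMultifield A) {a b : R}
    (ha : a ≠ A.zero) (hb : b ≠ A.zero) (h : ∀ x ∈ XSet A, x a = x b) : a = b := by
  have hR := hA.1.toIsMultiring
  by_contra hne
  have hab1 : A.mul a b ≠ A.one := fun hab => hne <|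
    calc a = A.mul (A.mul a b) b := by rw [hR.mul_assoc', hA.mul_self_eq_one hb, hR.mul_one']
      _ = b := by rw [hab, hR.one_mul']
  obtain ⟨x, hx, hxab⟩ := exists_mem_xSet_apply_eq_neg_one hA (hA.1.mul_ne_zero ha hb) hab1
  rw [hx.1.2 a b ha hb, h x hx, Int.units_mul_self] at hxab
  exact absurd hxab (by decide)

theorem mem_q2add_iff {s t u : SignType} :
    u ∈ q2add s t ↔ (s = 0 → u = t) ∧ (t = 0 → u = s) ∧ (s = t → u = s) := by
  cases s <;> cases t <;> cases u <;> simp [q2add]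

def signToUnit : SignType → ℤˣ
  | .neg => -1
  | _ => 1

theorem signToUnit_unitToSign (u : ℤˣ) : signToUnit (unitToSign u) = u := by
  rcases Int.units_eq_one_or u with rfl | rfl <;> rfl

theorem unitToSign_signToUnit {s : SignType} (hs : s ≠ 0) : unitToSign (signToUnit s) = s := by
  cases s <;> first | rfl | exact absurd rfl hs

theorem unitToSign_injective : Function.Injective unitToSign :=
  Function.LeftInverse.injective signToUnit_unitToSign

theorem unitToSign_ne_zero (u : ℤˣ) : unitToSign u ≠ 0 := by
  rcases Int.units_eq_one_or u with rfl | rfl <;> decide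

theorem unitToSign_eq_one_iff {u : ℤˣ} : unitToSign u = 1 ↔ u = 1 := by
  rcases Int.units_eq_one_or u with rfl | rfl <;> decide

theorem unitToSign_neg (u : ℤˣ) : unitToSign (-u) = -unitToSign u := by
  rcases Int.units_eq_one_or u with rfl | rfl <;> decide

theorem unitToSign_mul (u v : ℤˣ) : unitToSign (u * v) = unitToSign u * unitToSign v := by
  rcases Int.units_eq_one_or u with rfl | rfl <;> rcases Int.units_eq_one_or v with rfl | rfl <;>
    decide

theorem signToUnit_eq_one_iff {s : SignType} (hs : s ≠ 0) : signToUnit s = 1 ↔ s = 1 := by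
  cases s <;> first | decide | exact absurd rfl hs

theorem signToUnit_mul {s t : SignType} (hs : s ≠ 0) (ht : t ≠ 0) :
    signToUnit (s * t) = signToUnit s * signToUnit t := by
  cases s <;> cases t <;> first | decide | exact absurd rfl hs | exact absurd rfl ht

theorem isMultiringHom_Q2_of (hR : IsMultiring A) {σ : R → SignType}
    (eq_zero_iff : ∀ a, σ a = 0 ↔ a = A.zero) (map_neg : ∀ a, σ (A.neg a) = -σ a)
    (map_mul : ∀ a b, σ (A.mul a b) = σ a * σ b) (map_one : σ A.one = 1)
    (map_add_pos : ∀ {a b c}, σ a = 1 → σ b = 1 → c ∈ A.add a b → c ≠ A.zero → σ c = 1) :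
    IsMultiringHom A Q2 σ where
  map_add {a b c} hc := by
    have add_pos {a b c : R} (ha : σ a = 1) (hb : σ b = 1) (hc : c ∈ A.add a b) : σ c = 1 := by
      by_cases hc0 : c = A.zero
      · subst hc0
        rw [hR.eq_neg_of_zero_mem_add hc, map_neg, ha] at hb
        exact absurd hb (by decide)
      · exact map_add_pos ha hb hc hc0
    show σ c ∈ q2add (σ a) (σ b)
    rw [mem_q2add_iff]
    refine ⟨fun ha => ?_, fun hb => ?_, fun hab => ?_⟩
    · rw [(eq_zero_iff a).mp ha] at hc
      rw [hR.zero_add'.mp hc]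
    · rw [(eq_zero_iff b).mp hb] at hc
      rw [hR.eq_of_mem_add_zero hc]
    · cases h : σ a
      · rw [(eq_zero_iff a).mp h] at hc
        rw [← hR.zero_add'.mp hc, ← hab, h]
      · have := add_pos (by rw [map_neg, h]; rfl) (by rw [map_neg, ← hab, h]; rfl)
          (hR.neg_mem_add_neg hc)
        rw [map_neg] at this
        exact neg_eq_iff_eq_neg.mp this
      · exact add_pos h (hab ▸ h) hc
  map_neg := map_neg
  map_zero := (eq_zero_iff _).mpr rfl
  map_mul := map_mul
  map_one := map_one

section Characters

variable {x : R → ℤˣ}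

theorem apply_one_of_mem_xSet (hF : IsMultifield A) (hx : x ∈ XSet A) : x A.one = 1 := by
  have h := hx.1.2 A.one A.one hF.one_ne_zero' hF.one_ne_zero'
  rw [hF.mul_one'] at h
  exact right_eq_mul.mp h

theorem apply_neg_of_mem_xSet (hF : IsMultifield A) (hx : x ∈ XSet A) {a : R}
    (ha : a ≠ A.zero) : x (A.neg a) = -x a := by
  rw [← hF.mul_neg_one a, hx.1.2 a _ ha hF.neg_one_ne_zero, hx.2.1, mul_neg_one]

theorem amapX_zero : AmapX A x A.zero = 0 := if_pos rfl

theorem amapX_of_ne_zero {f : R} (hf : f ≠ A.zero) : AmapX A x f = unitToSign (x f) := if_neg hf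

theorem amapX_eq_zero_iff {f : R} : AmapX A x f = 0 ↔ f = A.zero := by
  by_cases hf : f = A.zero
  · simp [hf, amapX_zero]
  · simp [hf, amapX_of_ne_zero hf, unitToSign_ne_zero]

theorem amapX_eq_one_iff {f : R} : AmapX A x f = 1 ↔ f ∈ kerSet A x := by
  by_cases hf : f = A.zero
  · simp [hf, amapX_zero, kerSet]
  · simp [hf, amapX_of_ne_zero hf, unitToSign_eq_one_iff, kerSet]

theorem isMultiringHom_amapX (hF : IsMultifield A) (hx : x ∈ XSet A) :
    IsMultiringHom A Q2 (AmapX A x) := by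
  refine isMultiringHom_Q2_of hF.toIsMultiring (fun _ => amapX_eq_zero_iff) (fun a => ?_)
    (fun a b => ?_) ?_ fun ha hb hc hc0 => ?_
  · by_cases ha : a = A.zero
    · rw [ha, hF.neg_zero, amapX_zero, neg_zero]
    · rw [amapX_of_ne_zero (hF.neg_ne_zero ha), amapX_of_ne_zero ha,
        apply_neg_of_mem_xSet hF hx ha, unitToSign_neg]
  · by_cases ha : a = A.zero
    · rw [ha, hF.zero_mul', amapX_zero, zero_mul]
    by_cases hb : b = A.zero
    · rw [hb, hF.mul_zero', amapX_zero, mul_zero]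
    rw [amapX_of_ne_zero (hF.mul_ne_zero ha hb), amapX_of_ne_zero ha, amapX_of_ne_zero hb,
      hx.1.2 a b ha hb, unitToSign_mul]
  · rw [amapX_of_ne_zero hF.one_ne_zero', apply_one_of_mem_xSet hF hx]
    rfl
  · exact amapX_eq_one_iff.mpr
      (hx.2.2 _ _ (amapX_eq_one_iff.mp ha) (amapX_eq_one_iff.mp hb) _ hc hc0)

theorem injOn_amapX : Set.InjOn (AmapX A) (XSet A) := by
  intro x hx y hy h
  funext f
  by_cases hf : f = A.zero
  · rw [hf, hx.1.1, hy.1.1]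
  · apply unitToSign_injective
    simpa only [amapX_of_ne_zero hf] using congrFun h f

end Characters

theorem IsMultiringHom.apply_ne_zero {σ : R → SignType} (hσ : IsMultiringHom A Q2 σ)
    (hF : IsMultifield A) {f : R} (hf : f ≠ A.zero) : σ f ≠ 0 := by
  obtain ⟨g, hg⟩ := hF.inv f hf
  intro h0
  have h := hσ.map_mul f g
  rw [hg, hσ.map_one, h0] at h
  simp [Q2] at h

theorem signToUnit_comp_mem_xSet (hF : IsMultifield A) {σ : R → SignType}
    (hσ : IsMultiringHom A Q2 σ) : signToUnit ∘ σ ∈ XSet A := by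
  refine ⟨⟨?_, fun a b ha hb => ?_⟩, ?_, ?_⟩
  · simp only [Function.comp_apply, hσ.map_zero]
    rfl
  · simp only [Function.comp_apply, hσ.map_mul]
    exact signToUnit_mul (hσ.apply_ne_zero hF ha) (hσ.apply_ne_zero hF hb)
  · simp only [Function.comp_apply, hσ.map_neg, hσ.map_one]
    rfl
  · rintro a b ⟨ha0, ha⟩ ⟨hb0, hb⟩ c hc hc0
    rw [Function.comp_apply, signToUnit_eq_one_iff (hσ.apply_ne_zero hF ha0)] at ha
    rw [Function.comp_apply, signToUnit_eq_one_iff (hσ.apply_ne_zero hF hb0)] at hb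
    have h := hσ.map_add hc
    rw [ha, hb] at h
    exact ⟨hc0, by rw [Function.comp_apply, h]; rfl⟩

theorem amapX_signToUnit_comp (hF : IsMultifield A) {σ : R → SignType}
    (hσ : IsMultiringHom A Q2 σ) : AmapX A (signToUnit ∘ σ) = σ := by
  funext f
  by_cases hf : f = A.zero
  · rw [hf, amapX_zero, hσ.map_zero]
    rfl
  · rw [amapX_of_ne_zero hf, Function.comp_apply, unitToSign_signToUnit (hσ.apply_ne_zero hF hf)]

theorem bijOn_amapX (hF : IsMultifield A) : Set.BijOn (AmapX A) (XSet A) (SperSet A) :=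
  ⟨fun _ hx => isMultiringHom_amapX hF hx, injOn_amapX,
    fun _ hσ => ⟨_, signToUnit_comp_mem_xSet hF hσ, amapX_signToUnit_comp hF hσ⟩⟩

theorem bijOn_eval_xSet (hA : IsRealReducedMultifield A) :
    Set.BijOn (fun f (x : {σ : R → ℤˣ // σ ∈ XSet A}) => x.1 f) {f | f ≠ A.zero} (GSet A) :=
  ⟨fun f hf => ⟨f, hf, fun _ => rfl⟩,
    fun _ hf _ hg h => eq_of_forall_mem_xSet_apply_eq hA hf hg fun x hx => congrFun h ⟨x, hx⟩,
    fun _ ⟨f, hf, hτ⟩ => ⟨f, hf, funext fun x => (hτ x).symm⟩⟩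

/-- For a real reduced multifield `F`: the map `A : X → Sper(F)`, `x ↦ x'`, is a bijection,
and each `σ ∈ G` arises from a unique `f ∈ F∖{0}` via `σ(x) = x(f)`, the assignment
`f ↦ σ_f` being a bijection `F∖{0} → G` (whose inverse is the map `B : G → F∖{0}`). -/
theorem spec_bijections_of_real_reduced_multifield {R : Type u} (A : MultiringData R)
    (hA : IsRealReducedMultifield A) :
    Set.BijOn (AmapX A) (XSet A) (SperSet A) ∧
    (∀ τ ∈ GSet A, ∃! f : R, f ≠ A.zero ∧ ∀ x : {σ : R → ℤˣ // σ ∈ XSet A}, τ x = x.1 f) ∧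
    Set.BijOn (fun (f : R) => fun (x : {σ : R → ℤˣ // σ ∈ XSet A}) => x.1 f)
      {f : R | f ≠ A.zero} (GSet A) := by
  refine ⟨bijOn_amapX hA.1, fun τ ⟨f, hf, hτ⟩ => ⟨f, ⟨hf, hτ⟩, fun g ⟨hg, hgτ⟩ => ?_⟩,
    bijOn_eval_xSet hA⟩
  exact (bijOn_eval_xSet hA).injOn hg hf (funext fun x => (hgτ x).symm.trans (hτ x))
end

section
/- Let F be a real reduced multifield, X={x∈χ(F) : x(−1)=−1 and a,b∈ker(x) ⟹ (a+b)∖{0}⊆ker(x)}, where χ(F)={σ∈{−1,1}^{F∖{0}} : σ(ab)=σ(a)σ(b)} and ker(x)={f : x(f)=1}, and G={σ∈{−1,1}^X : there exists f∈F∖{0} with σ(x)=x(f) for all x∈X}. Then (X,G) is a space of orderings; moreover, for σ,γ∈G with associated elements f_σ,f_γ∈F∖{0}, the value set satisfies D(σ,γ)={τ∈G : f_τ∈(f_σ+f_γ)∖{0}}. -/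
universe u v w

namespace RRMF

variable {R : Type u} {A : MultiringData R}

section Basic
variable (hm : IsMultiring A)
include hm

lemma mul_one'' (a : R) : A.mul a A.one = a := by rw [hm.mul_comm']; exact hm.one_mul' a

lemma zero_mul'' (a : R) : A.mul A.zero a = A.zero := by rw [hm.mul_comm']; exact hm.mul_zero' a

lemma mem_zero_add (a : R) : a ∈ A.add A.zero a := hm.zero_add'.mpr rfl

lemma zero_mem_add_neg (a : R) : A.zero ∈ A.add a (A.neg a) := (hm.add_rev (mem_zero_add hm a)).1

lemma neg_zero'' : A.neg A.zero = A.zero :=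
  hm.zero_add'.mp (hm.add_rev (mem_zero_add hm A.zero)).1

lemma neg_neg'' (a : R) : A.neg (A.neg a) = a :=
  hm.zero_add'.mp (hm.add_rev (zero_mem_add_neg hm a)).1

lemma neg_mul'' (a b : R) : A.mul (A.neg a) b = A.neg (A.mul a b) := by
  have h := hm.distrib b (zero_mem_add_neg hm a)
  rw [zero_mul'' hm] at h
  have h2 := (hm.add_rev h).1
  have : A.neg (A.mul (A.neg a) b) = A.mul a b := (hm.zero_add'.mp h2)
  rw [← this, neg_neg'' hm]

lemma neg_one_mul'' (a : R) : A.mul (A.neg A.one) a = A.neg a := by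
  rw [neg_mul'' hm, hm.one_mul']

lemma neg_mem_add {a b c : R} (h : c ∈ A.add a b) :
    A.neg c ∈ A.add (A.neg a) (A.neg b) := by
  have := hm.distrib (A.neg A.one) h
  rwa [hm.mul_comm' c, hm.mul_comm' a, hm.mul_comm' b, neg_one_mul'' hm, neg_one_mul'' hm,
    neg_one_mul'' hm] at this

lemma assoc1 {a b c t d : R} (h1 : t ∈ A.add a b) (h2 : d ∈ A.add t c) :
    ∃ s ∈ A.add b c, d ∈ A.add a s := by
  have hd : d ∈ ⋃ t ∈ A.add a b, A.add t c := Set.mem_biUnion h1 h2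
  rw [hm.add_assoc' a b c] at hd
  simpa using hd

lemma assoc2 {a b c s d : R} (h1 : s ∈ A.add b c) (h2 : d ∈ A.add a s) :
    ∃ t ∈ A.add a b, d ∈ A.add t c := by
  have hd : d ∈ ⋃ s ∈ A.add b c, A.add a s := Set.mem_biUnion h1 h2
  rw [← hm.add_assoc' a b c] at hd
  simpa using hd

lemma mem_add_comm {a b c : R} (h : c ∈ A.add a b) : c ∈ A.add b a := by
  rwa [hm.add_comm']

lemma eq_neg_of_zero_mem {a b : R} (h : A.zero ∈ A.add a b) : b = A.neg a := by
  have := (hm.add_rev h).2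
  exact (hm.zero_add'.mp (mem_add_comm hm this)).symm

end Basic

end RRMF
namespace RRMF

variable {R : Type u} {A : MultiringData R}

section Field
variable (hA : IsRealReducedMultifield A)
include hA

lemma hm' : IsMultiring A := hA.1.toIsMultiring

lemma mul_self_eq_one {a : R} (ha : a ≠ A.zero) : A.mul a a = A.one := by
  have hm := hm' hA
  obtain ⟨b, hb⟩ := hA.1.inv a ha
  have h3 := hA.2.1 a
  calc A.mul a a = A.mul (A.mul a a) (A.mul a b) := by rw [hb, mul_one'' hm]
    _ = A.mul (A.mul (A.mul a a) a) b := (hm.mul_assoc' (A.mul a a) a b).symm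
    _ = A.mul a b := by rw [h3]
    _ = A.one := hb

lemma mul_ne_zero' {a b : R} (ha : a ≠ A.zero) (hb : b ≠ A.zero) :
    A.mul a b ≠ A.zero := by
  have hm := hm' hA
  intro h
  apply ha
  calc a = A.mul a (A.mul b b) := by rw [mul_self_eq_one hA hb, mul_one'' hm]
    _ = A.mul (A.mul a b) b := by rw [hm.mul_assoc']
    _ = A.zero := by rw [h, zero_mul'' hm]

lemma neg_ne_zero' {a : R} (ha : a ≠ A.zero) : A.neg a ≠ A.zero := by
  have hm := hm' hA
  intro h
  apply ha
  rw [← neg_neg'' hm a, h, neg_zero'' hm]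

lemma neg_one_ne_zero : A.neg A.one ≠ A.zero := neg_ne_zero' hA hA.1.one_ne_zero'

lemma neg_one_ne_one : A.neg A.one ≠ A.one := by
  have hm := hm' hA
  intro h
  have h0 : A.zero ∈ A.add A.one A.one := by
    have := zero_mem_add_neg hm A.one
    rwa [h] at this
  exact hA.1.one_ne_zero' (hA.2.2 _ h0).symm

lemma add_one_one : A.add A.one A.one = {A.one} := by
  ext c
  constructor
  · intro h; exact hA.2.2 c h
  · intro h
    obtain ⟨d, hd⟩ := (hm' hA).add_nonempty A.one A.one
    have hd1 := hA.2.2 d hd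
    rw [Set.mem_singleton_iff.mp h]
    exact hd1 ▸ hd

/-- scaling: multiply a membership by a nonzero d, and back -/
lemma mem_add_iff_mul {a b c d : R} (hd : d ≠ A.zero) :
    c ∈ A.add a b ↔ A.mul c d ∈ A.add (A.mul a d) (A.mul b d) := by
  have hm := hm' hA
  constructor
  · exact hm.distrib d
  · intro h
    have := hm.distrib d h
    have e : ∀ x : R, A.mul (A.mul x d) d = x := by
      intro x
      rw [hm.mul_assoc', mul_self_eq_one hA hd, mul_one'' hm]
    rwa [e, e, e] at this

lemma one_mem_add_one {b : R} (hb : b ≠ A.zero) : A.one ∈ A.add A.one b := by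
  have hm := hm' hA
  -- special case b = -1
  by_cases hb1 : b = A.neg A.one
  · subst hb1
    have h0 : A.zero ∈ A.add A.one (A.neg A.one) := zero_mem_add_neg hm A.one
    have h1 : A.one ∈ A.add A.one A.zero :=
      mem_add_comm hm (mem_zero_add hm A.one)
    obtain ⟨t, ht1, ht2⟩ := assoc2 hm h0 h1
    rw [hA.2.2 t ht1] at ht2
    exact ht2
  · -- general case
    obtain ⟨s, hs⟩ := hm.add_nonempty A.one b
    have hs0 : s ≠ A.zero := by
      intro h0
      rw [h0] at hs
      have := eq_neg_of_zero_mem hm hs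
      exact hb1 this
    -- 1 = s*s ∈ s + b*s
    have h1 : A.one ∈ A.add s (A.mul b s) := by
      have := hm.distrib s hs
      rwa [hm.one_mul', mul_self_eq_one hA hs0] at this
    -- 1 ∈ (1+b) + bs = 1 + (b + bs); get w ∈ b + bs with 1 ∈ 1 + w
    obtain ⟨w, hw1, hw2⟩ := assoc1 hm hs h1
    have hw0 : w ≠ A.zero := by
      intro h0
      rw [h0] at hw1
      have hbs : A.mul b s = A.neg b := eq_neg_of_zero_mem hm hw1
      have hsn : s = A.neg A.one := by
        have h5 := congrArg (A.mul b) hbs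
        rwa [← hm.mul_assoc', mul_self_eq_one hA hb, hm.one_mul',
          hm.mul_comm' b (A.neg b), neg_mul'' hm, mul_self_eq_one hA hb] at h5
      rw [hsn] at hs
      -- s = -1 ∈ 1 + b ⇒ b ∈ -1 + -1 = {-1}
      have h2 := (hm.add_rev hs).2
      -- b ∈ add (neg 1) (neg 1)
      have h3 := hm.distrib (A.neg A.one) h2
      rw [mul_self_eq_one hA (neg_one_ne_zero hA)] at h3
      have h4 : A.mul b (A.neg A.one) = A.one := hA.2.2 _ h3
      rw [hm.mul_comm', neg_one_mul'' hm] at h4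
      exact hb1 (by rw [← neg_neg'' hm b, h4])
    have hwb : A.mul w b ∈ A.add A.one s := by
      have := hm.distrib b hw1
      rwa [mul_self_eq_one hA hb, hm.mul_assoc', hm.mul_comm' s b, ← hm.mul_assoc',
        mul_self_eq_one hA hb, hm.one_mul'] at this
    -- 1 + s ⊆ 1 + (1+b) = (1+1)+b = 1+b
    have hwb2 : A.mul w b ∈ A.add A.one b := by
      obtain ⟨t, ht1, ht2⟩ := assoc2 hm hs hwb
      rwa [hA.2.2 t ht1] at ht2
    -- w = (w*b)*b ∈ b + b² = b + 1
    have hw3 : w ∈ A.add A.one b := by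
      have := hm.distrib b hwb2
      rwa [hm.mul_assoc', mul_self_eq_one hA hb, mul_one'' hm, hm.one_mul',
        hm.add_comm' b A.one] at this
    -- 1 ∈ 1 + w ⊆ 1 + (1+b) = (1+1)+b = 1+b
    obtain ⟨t, ht1, ht2⟩ := assoc2 hm hw3 hw2
    rwa [hA.2.2 t ht1] at ht2

lemma mem_add_self_left {a b : R} (ha : a ≠ A.zero) (hb : b ≠ A.zero) :
    a ∈ A.add a b := by
  have hm := hm' hA
  have h := one_mem_add_one hA (mul_ne_zero' hA ha hb)
  have := hm.distrib a h
  rwa [hm.one_mul', hm.mul_assoc', hm.mul_comm' b a, ← hm.mul_assoc',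
    mul_self_eq_one hA ha, hm.one_mul'] at this

lemma mem_add_self_right {a b : R} (ha : a ≠ A.zero) (hb : b ≠ A.zero) :
    b ∈ A.add a b := mem_add_comm (hm' hA) (mem_add_self_left hA hb ha)

lemma add_neg_self_univ {a c : R} (ha : a ≠ A.zero) : c ∈ A.add a (A.neg a) := by
  have hm := hm' hA
  by_cases hc : c = A.zero
  · rw [hc]; exact zero_mem_add_neg hm a
  · -- c*a ∈ 1 + (-1) since 1 ∈ 1 + c*a
    have h1 : A.one ∈ A.add A.one (A.mul c a) :=
      one_mem_add_one hA (mul_ne_zero' hA hc ha)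
    have h2 := (hm.add_rev h1).2
    -- c*a ∈ add (neg 1) 1
    have h3 : A.mul c a ∈ A.add A.one (A.neg A.one) := mem_add_comm hm h2
    have := hm.distrib a h3
    rwa [hm.one_mul', neg_one_mul'' hm, hm.mul_assoc', mul_self_eq_one hA ha,
      mul_one'' hm] at this

end Field

end RRMF
namespace RRMF

/-- A preordering of the multifield. -/
structure IsPre {R : Type u} (A : MultiringData R) (T : Set R) : Prop where
  nz : ∀ t ∈ T, t ≠ A.zero
  one_mem : A.one ∈ T
  mul_mem : ∀ s ∈ T, ∀ t ∈ T, A.mul s t ∈ T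
  add_mem : ∀ s ∈ T, ∀ t ∈ T, ∀ c ∈ A.add s t, c ≠ A.zero → c ∈ T
  neg_one_nmem : A.neg A.one ∉ T

variable {R : Type u} {A : MultiringData R}

section Pre
variable (hA : IsRealReducedMultifield A)
include hA

lemma pre_singleton : IsPre A {A.one} := by
  constructor
  · intro t ht; rw [Set.mem_singleton_iff.mp ht]; exact hA.1.one_ne_zero'
  · rfl
  · intro s hs t ht
    rw [Set.mem_singleton_iff.mp hs, Set.mem_singleton_iff.mp ht,
      (hm' hA).one_mul']; rfl
  · intro s hs t ht c hc _
    rw [Set.mem_singleton_iff.mp hs] at hc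
    rw [Set.mem_singleton_iff.mp ht] at hc
    exact hA.2.2 c hc
  · intro h
    exact neg_one_ne_one hA (Set.mem_singleton_iff.mp h)

lemma mul_left_comm'' (a b c : R) :
    A.mul a (A.mul b c) = A.mul b (A.mul a c) := by
  have hm := hm' hA
  rw [← hm.mul_assoc', hm.mul_comm' a b, hm.mul_assoc']

lemma mul_cancel_right {a : R} (ha : a ≠ A.zero) (x : R) :
    A.mul (A.mul x a) a = x := by
  have hm := hm' hA
  rw [hm.mul_assoc', mul_self_eq_one hA ha, mul_one'' hm]

/-- rearrangement of a double sum -/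
lemma four_rearrange {c u v p q r s : R} (hc : c ∈ A.add u v) (hu : u ∈ A.add p q)
    (hv : v ∈ A.add r s) :
    ∃ m ∈ A.add p s, ∃ n ∈ A.add q r, c ∈ A.add m n := by
  have hm := hm' hA
  obtain ⟨w, hw1, hw2⟩ := assoc1 hm hu hc
  -- hw1 : w ∈ add q v, hw2 : c ∈ add p w
  obtain ⟨n, hn1, hn2⟩ := assoc2 hm hv hw1
  -- hn1 : n ∈ add q r, hn2 : w ∈ add n s
  have hn2' : w ∈ A.add s n := mem_add_comm hm hn2
  obtain ⟨m, hmm1, hmm2⟩ := assoc2 hm hn2' hw2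
  exact ⟨m, hmm1, n, hn1, hmm2⟩

/-- the extension of a preordering by an element -/
def genUp (A : MultiringData R) (T : Set R) (a : R) : Set R :=
  {c | c ≠ A.zero ∧ ∃ t1 ∈ insert A.zero T, ∃ t2 ∈ insert A.zero T,
    c ∈ A.add t1 (A.mul a t2)}

lemma t0_mul {T : Set R} (hT : IsPre A T) {t1 t2 : R} (h1 : t1 ∈ insert A.zero T)
    (h2 : t2 ∈ insert A.zero T) : A.mul t1 t2 ∈ insert A.zero T := by
  have hm := hm' hA
  rcases h1 with h1 | h1
  · rw [h1, zero_mul'' hm]; exact Set.mem_insert _ _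
  rcases h2 with h2 | h2
  · rw [h2, hm.mul_zero']; exact Set.mem_insert _ _
  exact Set.mem_insert_of_mem _ (hT.mul_mem _ h1 _ h2)

lemma t0_add {T : Set R} (hT : IsPre A T) {t1 t2 c : R} (h1 : t1 ∈ insert A.zero T)
    (h2 : t2 ∈ insert A.zero T) (hc : c ∈ A.add t1 t2) : c ∈ insert A.zero T := by
  have hm := hm' hA
  rcases h1 with h1 | h1
  · rw [h1] at hc
    rw [← hm.zero_add'.mp hc]
    exact h2
  rcases h2 with h2 | h2
  · rw [h2] at hc
    rw [← hm.zero_add'.mp (mem_add_comm hm hc)]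
    exact Set.mem_insert_of_mem _ h1
  by_cases hc0 : c = A.zero
  · rw [hc0]; exact Set.mem_insert _ _
  · exact Set.mem_insert_of_mem _ (hT.add_mem _ h1 _ h2 _ hc hc0)

lemma subset_genUp {T : Set R} (hT : IsPre A T) {a : R} (ha : a ≠ A.zero) :
    T ⊆ genUp A T a := by
  have hm := hm' hA
  intro t ht
  refine ⟨hT.nz t ht, t, Set.mem_insert_of_mem _ ht, A.zero, Set.mem_insert _ _, ?_⟩
  rw [hm.mul_zero', hm.add_comm']
  exact mem_zero_add hm t

lemma self_mem_genUp {T : Set R} (hT : IsPre A T) {a : R} (ha : a ≠ A.zero) :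
    a ∈ genUp A T a := by
  have hm := hm' hA
  refine ⟨ha, A.zero, Set.mem_insert _ _, A.one, Set.mem_insert_of_mem _ hT.one_mem, ?_⟩
  rw [mul_one'' hm]
  exact mem_zero_add hm a

lemma isPre_genUp {T : Set R} (hT : IsPre A T) {a : R} (ha : a ≠ A.zero)
    (hna : A.neg a ∉ T) : IsPre A (genUp A T a) := by
  have hm := hm' hA
  constructor
  · intro t ht; exact ht.1
  · exact subset_genUp hA hT ha hT.one_mem
  · -- multiplicative closure
    rintro c ⟨hc0, t1, ht1, t2, ht2, hc⟩ c' ⟨hc0', t3, ht3, t4, ht4, hc'⟩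
    refine ⟨mul_ne_zero' hA hc0 hc0', ?_⟩
    -- c'·c ∈ (t3·c) + ((a·t4)·c)
    have hcc : A.mul c' c ∈ A.add (A.mul t3 c) (A.mul (A.mul a t4) c) := hm.distrib c hc'
    -- t3·c ∈ t1·t3 + a·(t2·t3)
    have hu : A.mul t3 c ∈ A.add (A.mul t1 t3) (A.mul a (A.mul t2 t3)) := by
      have := hm.distrib t3 hc
      rwa [hm.mul_comm' c t3, hm.mul_assoc' a t2 t3] at this
    -- (a·t4)·c ∈ a·(t1·t4) + t2·t4
    have hv : A.mul (A.mul a t4) c ∈ A.add (A.mul a (A.mul t1 t4)) (A.mul t2 t4) := by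
      have := hm.distrib (A.mul a t4) hc
      rwa [hm.mul_comm' c (A.mul a t4), mul_left_comm'' hA t1 a t4,
        show A.mul (A.mul a t2) (A.mul a t4) = A.mul t2 t4 by
          rw [hm.mul_comm' a t2, hm.mul_assoc' t2 a (A.mul a t4), ← hm.mul_assoc' a a t4,
            mul_self_eq_one hA ha, hm.one_mul']] at this
    obtain ⟨m, hmm, n, hnm, hcn⟩ := four_rearrange hA hcc hu hv
    -- m ∈ t1t3 + t2t4 ⊆ T0 ; n ∈ a(t2t3) + a(t1t4), n = a·(n·a), n·a ∈ t2t3 + t1t4 ⊆ T0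
    have hmT : m ∈ insert A.zero T :=
      t0_add hA hT (t0_mul hA hT ht1 ht3) (t0_mul hA hT ht2 ht4) hmm
    have hna2 : A.mul n a ∈ A.add (A.mul t2 t3) (A.mul t1 t4) := by
      have := hm.distrib a hnm
      rwa [hm.mul_comm' a (A.mul t2 t3), mul_cancel_right hA ha,
        hm.mul_comm' a (A.mul t1 t4), mul_cancel_right hA ha] at this
    have hnT : A.mul n a ∈ insert A.zero T :=
      t0_add hA hT (t0_mul hA hT ht2 ht3) (t0_mul hA hT ht1 ht4) hna2
    refine ⟨m, hmT, A.mul n a, hnT, ?_⟩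
    have : A.mul a (A.mul n a) = n := by
      rw [hm.mul_comm' n a, ← hm.mul_assoc', mul_self_eq_one hA ha, hm.one_mul']
    rw [this, hm.mul_comm' c c']
    exact hcn
  · -- additive closure
    rintro c ⟨hc0, t1, ht1, t2, ht2, hc⟩ c' ⟨hc0', t3, ht3, t4, ht4, hc'⟩ e he he0
    refine ⟨he0, ?_⟩
    have hc'2 : c' ∈ A.add (A.mul a t4) t3 := mem_add_comm hm hc'
    obtain ⟨m, hmm, n, hnm, hen⟩ := four_rearrange hA he hc hc'2
    -- m ∈ t1 + t3, n ∈ a t2 + a t4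
    have hmT : m ∈ insert A.zero T := t0_add hA hT ht1 ht3 hmm
    have hna2 : A.mul n a ∈ A.add t2 t4 := by
      have := hm.distrib a hnm
      rwa [hm.mul_comm' a t2, mul_cancel_right hA ha,
        hm.mul_comm' a t4, mul_cancel_right hA ha] at this
    have hnT : A.mul n a ∈ insert A.zero T := t0_add hA hT ht2 ht4 hna2
    refine ⟨m, hmT, A.mul n a, hnT, ?_⟩
    have : A.mul a (A.mul n a) = n := by
      rw [hm.mul_comm' n a, ← hm.mul_assoc', mul_self_eq_one hA ha, hm.one_mul']
    rw [this]
    exact hen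
  · -- -1 not in
    rintro ⟨h0, t1, ht1, t2, ht2, hc⟩
    have hm := hm' hA
    rcases ht2 with ht2 | ht2
    · rw [ht2, hm.mul_zero'] at hc
      have : t1 = A.neg A.one := hm.zero_add'.mp (mem_add_comm hm hc)
      rcases ht1 with ht1 | ht1
      · rw [this] at ht1; exact neg_one_ne_zero hA ht1
      · rw [this] at ht1; exact hT.neg_one_nmem ht1
    · have ht20 : t2 ≠ A.zero := hT.nz t2 ht2
      rcases ht1 with ht1 | ht1
      · rw [ht1] at hc
        have heq : A.mul a t2 = A.neg A.one := hm.zero_add'.mp hc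
        have h7 : A.neg a = t2 := by
          have h6 := congrArg (fun x => A.mul x t2) heq
          rw [mul_cancel_right hA ht20, neg_one_mul'' hm] at h6
          rw [h6, neg_neg'' hm]
        exact hna (h7 ▸ ht2)
      · have ht10 : t1 ≠ A.zero := hT.nz t1 ht1
        have h2 := (hm.add_rev hc).2
        -- a·t2 ∈ add (neg t1) (neg 1)
        have h3 := neg_mem_add hm h2
        rw [neg_neg'' hm, neg_neg'' hm] at h3
        -- neg (a t2) ∈ add t1 1
        have hnz : A.neg (A.mul a t2) ≠ A.zero :=
          neg_ne_zero' hA (mul_ne_zero' hA ha ht20)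
        have h4 : A.neg (A.mul a t2) ∈ T :=
          hT.add_mem _ ht1 _ hT.one_mem _ h3 hnz
        have h5 : A.mul (A.neg (A.mul a t2)) t2 ∈ T := hT.mul_mem _ h4 _ ht2
        have : A.mul (A.neg (A.mul a t2)) t2 = A.neg a := by
          rw [neg_mul'' hm, mul_cancel_right hA ht20]
        exact hna (this ▸ h5)

lemma exists_maximal_pre {T0 : Set R} (h0 : IsPre A T0) :
    ∃ T, IsPre A T ∧ T0 ⊆ T ∧ ∀ a, a ≠ A.zero → a ∉ T → A.neg a ∈ T := by
  obtain ⟨T, hT0T, hTmax⟩ := zorn_subset_nonempty {T | IsPre A T}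
    (fun c hc hchain hcne => by
      obtain ⟨s0, hs0⟩ := hcne
      refine ⟨⋃₀ c, ?_, fun s hs => Set.subset_sUnion_of_mem hs⟩
      constructor
      · rintro t ⟨s, hs, hts⟩; exact (hc hs).nz t hts
      · exact ⟨s0, hs0, (hc hs0).one_mem⟩
      · rintro s ⟨u, hu, hsu⟩ t ⟨v, hv, htv⟩
        rcases hchain.total hu hv with h | h
        · exact ⟨v, hv, (hc hv).mul_mem _ (h hsu) _ htv⟩
        · exact ⟨u, hu, (hc hu).mul_mem _ hsu _ (h htv)⟩
      · rintro s ⟨u, hu, hsu⟩ t ⟨v, hv, htv⟩ e he he0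
        rcases hchain.total hu hv with h | h
        · exact ⟨v, hv, (hc hv).add_mem _ (h hsu) _ htv _ he he0⟩
        · exact ⟨u, hu, (hc hu).add_mem _ hsu _ (h htv) _ he he0⟩
      · rintro ⟨s, hs, hns⟩; exact (hc hs).neg_one_nmem hns)
    T0 h0
  refine ⟨T, hTmax.prop, hT0T, fun a ha hna => ?_⟩
  by_contra hnna
  have hbig := isPre_genUp hA hTmax.prop ha hnna
  have hsub : T ⊆ genUp A T a := subset_genUp hA hTmax.prop ha
  have := hTmax.eq_of_subset hbig hsub
  exact hna (this ▸ self_mem_genUp hA hTmax.prop ha)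

end Pre

end RRMF
namespace RRMF

variable {R : Type u} {A : MultiringData R}

lemma units_eq_of_mul_eq_one {u v : ℤˣ} (h : u * v = 1) : u = v := by
  rcases Int.units_eq_one_or u with h1 | h1 <;>
    rcases Int.units_eq_one_or v with h2 | h2 <;> simp_all

lemma units_ne_cases {u v w : ℤˣ} (h : u ≠ v) : w = u ∨ w = v := by
  rcases Int.units_eq_one_or u with h1 | h1 <;>
    rcases Int.units_eq_one_or v with h2 | h2 <;>
      rcases Int.units_eq_one_or w with h3 | h3 <;> simp_all

open Classical in
/-- the character attached to an ordering -/
noncomputable def xOfPre (A : MultiringData R) (T : Set R) : R → ℤˣ :=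
  fun f => if f ∈ T ∨ f = A.zero then 1 else -1

lemma xOfPre_eq_one {T : Set R} {f : R} (h : f ∈ T) : xOfPre A T f = 1 := by
  unfold xOfPre
  rw [if_pos (Or.inl h)]

lemma xOfPre_zero {T : Set R} : xOfPre A T A.zero = 1 := by
  unfold xOfPre
  rw [if_pos (Or.inr rfl)]

lemma xOfPre_eq_neg_one {T : Set R} {f : R} (hf : f ≠ A.zero) (h : f ∉ T) :
    xOfPre A T f = -1 := by
  unfold xOfPre
  rw [if_neg (by tauto)]

lemma mem_of_xOfPre_eq_one {T : Set R} {f : R} (hf : f ≠ A.zero)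
    (h : xOfPre A T f = 1) : f ∈ T := by
  by_contra hn
  rw [xOfPre_eq_neg_one hf hn] at h
  exact absurd h (by decide)

section Pre2
variable (hA : IsRealReducedMultifield A)
include hA

lemma notin_of_neg_mem {T : Set R} (hT : IsPre A T) {t : R} (ht : A.neg t ∈ T) :
    t ∉ T := by
  have hm := hm' hA
  intro htT
  have ht0 : t ≠ A.zero := hT.nz t htT
  have := hT.mul_mem _ ht _ htT
  rw [neg_mul'' hm, mul_self_eq_one hA ht0] at this
  exact hT.neg_one_nmem this

lemma mul_notmem {T : Set R} (hT : IsPre A T) {a b : R} (ha : a ∈ T) (hb : b ∉ T)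
    (hb0 : b ≠ A.zero) : A.mul a b ∉ T := by
  have hm := hm' hA
  intro h
  apply hb
  have ha0 : a ≠ A.zero := hT.nz a ha
  have := hT.mul_mem _ h _ ha
  rwa [hm.mul_comm' a b, mul_cancel_right hA ha0] at this

lemma mul_mem_of_notmem {T : Set R} (hT : IsPre A T)
    (htot : ∀ a, a ≠ A.zero → a ∉ T → A.neg a ∈ T) {a b : R}
    (ha0 : a ≠ A.zero) (hb0 : b ≠ A.zero) (ha : a ∉ T) (hb : b ∉ T) :
    A.mul a b ∈ T := by
  have hm := hm' hA
  have h1 := htot a ha0 ha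
  have h2 := htot b hb0 hb
  have := hT.mul_mem _ h1 _ h2
  rwa [neg_mul'' hm, hm.mul_comm' a (A.neg b), neg_mul'' hm, hm.mul_comm' b a,
    neg_neg'' hm] at this

lemma xOfPre_mem_XSet {T : Set R} (hT : IsPre A T)
    (htot : ∀ a, a ≠ A.zero → a ∉ T → A.neg a ∈ T) : xOfPre A T ∈ XSet A := by
  have hm := hm' hA
  refine ⟨⟨xOfPre_zero, ?_⟩, ?_, ?_⟩
  · intro a b ha hb
    have hab0 : A.mul a b ≠ A.zero := mul_ne_zero' hA ha hb
    by_cases haT : a ∈ T <;> by_cases hbT : b ∈ T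
    · rw [xOfPre_eq_one haT, xOfPre_eq_one hbT,
        xOfPre_eq_one (hT.mul_mem _ haT _ hbT)]; rfl
    · rw [xOfPre_eq_one haT, xOfPre_eq_neg_one hb hbT,
        xOfPre_eq_neg_one hab0 (mul_notmem hA hT haT hbT hb)]; rfl
    · rw [xOfPre_eq_neg_one ha haT, xOfPre_eq_one hbT,
        xOfPre_eq_neg_one hab0 (by
          rw [hm.mul_comm']
          exact mul_notmem hA hT hbT haT ha)]; rfl
    · rw [xOfPre_eq_neg_one ha haT, xOfPre_eq_neg_one hb hbT,
        xOfPre_eq_one (mul_mem_of_notmem hA hT htot ha hb haT hbT)]; rfl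
  · exact xOfPre_eq_neg_one (neg_one_ne_zero hA) hT.neg_one_nmem
  · rintro a b ⟨ha0, ha1⟩ ⟨hb0, hb1⟩ c hc hc0
    have haT := mem_of_xOfPre_eq_one ha0 ha1
    have hbT := mem_of_xOfPre_eq_one hb0 hb1
    exact ⟨hc0, xOfPre_eq_one (hT.add_mem _ haT _ hbT _ hc hc0)⟩

lemma exists_x_mem_XSet : ∃ x, x ∈ XSet A := by
  obtain ⟨T, hT, _, htot⟩ := exists_maximal_pre hA (pre_singleton hA)
  exact ⟨xOfPre A T, xOfPre_mem_XSet hA hT htot⟩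

-- accessors for XSet members
lemma x_mul {x : R → ℤˣ} (hx : x ∈ XSet A) {a b : R} (ha : a ≠ A.zero)
    (hb : b ≠ A.zero) : x (A.mul a b) = x a * x b := hx.1.2 a b ha hb

lemma x_one {x : R → ℤˣ} (hx : x ∈ XSet A) : x A.one = 1 := by
  have hm := hm' hA
  have h := x_mul hA hx hA.1.one_ne_zero' hA.1.one_ne_zero'
  rw [hm.one_mul', Int.units_mul_self] at h
  exact h

lemma x_neg {x : R → ℤˣ} (hx : x ∈ XSet A) {a : R} (ha : a ≠ A.zero) :
    x (A.neg a) = -(x a) := by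
  have hm := hm' hA
  rw [← neg_one_mul'' hm, x_mul hA hx (neg_one_ne_zero hA) ha, hx.2.1]
  exact neg_one_mul (x a)

/-- easy direction of representation: membership in a sum constrains all signs -/
lemma easy_rep {f g k : R} (hf : f ≠ A.zero) (hg : g ≠ A.zero) (hk : k ≠ A.zero)
    (hmem : k ∈ A.add f g) {x : R → ℤˣ} (hx : x ∈ XSet A) :
    x k = x f ∨ x k = x g := by
  have hm := hm' hA
  by_cases hfg : x f = x g
  · left
    have h1 : A.mul k f ∈ A.add A.one (A.mul g f) := by
      have := hm.distrib f hmem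
      rwa [mul_self_eq_one hA hf] at this
    have hker : A.mul k f ∈ kerSet A x :=
      hx.2.2 A.one (A.mul g f) ⟨hA.1.one_ne_zero', x_one hA hx⟩
        ⟨mul_ne_zero' hA hg hf, by
          rw [x_mul hA hx hg hf, hfg, Int.units_mul_self]⟩
        _ h1 (mul_ne_zero' hA hk hf)
    have h2 := hker.2
    rw [x_mul hA hx hk hf] at h2
    exact units_eq_of_mul_eq_one h2
  · exact units_ne_cases hfg

/-- hard direction: separation theorem -/
lemma hard_rep {f g h : R} (hf : f ≠ A.zero) (hg : g ≠ A.zero) (hh : h ≠ A.zero)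
    (hval : ∀ x ∈ XSet A, x h = x f ∨ x h = x g) : h ∈ A.add f g := by
  have hm := hm' hA
  by_contra hmem
  have hhf : h ≠ f := fun e => hmem (by rw [e]; exact mem_add_self_left hA hf hg)
  have hhg : h ≠ g := fun e => hmem (by rw [e]; exact mem_add_self_right hA hf hg)
  have hgnf : g ≠ A.neg f := fun e => hmem (by rw [e]; exact add_neg_self_univ hA hf)
  set α := A.neg (A.mul h f) with hα
  set β := A.neg (A.mul h g) with hβ
  have hα0 : α ≠ A.zero := neg_ne_zero' hA (mul_ne_zero' hA hh hf)
  have hβ0 : β ≠ A.zero := neg_ne_zero' hA (mul_ne_zero' hA hh hg)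
  -- T1 := preordering generated by α
  have hnα : A.neg α ∉ ({A.one} : Set R) := by
    rw [hα, neg_neg'' hm]
    intro hmm
    apply hhf
    have h6 := congrArg (fun x => A.mul x f) (Set.mem_singleton_iff.mp hmm)
    rwa [mul_cancel_right hA hf, hm.one_mul'] at h6
  have hT1 : IsPre A (genUp A {A.one} α) := isPre_genUp hA (pre_singleton hA) hα0 hnα
  have hαT1 : α ∈ genUp A {A.one} α := self_mem_genUp hA (pre_singleton hA) hα0
  -- -β = h·g ∉ T1
  have hnβ : A.neg β ∉ genUp A {A.one} α := by
    rw [hβ, neg_neg'' hm]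
    rintro ⟨h0, t1, ht1, t2, ht2, hc⟩
    rcases ht2 with ht2 | ht2
    · -- t2 = 0 : h·g = t1 ∈ {0,1}
      rw [ht2, hm.mul_zero'] at hc
      have he : t1 = A.mul h g := hm.zero_add'.mp (mem_add_comm hm hc)
      rcases ht1 with ht1 | ht1
      · exact h0 (by rw [← he]; exact ht1)
      · apply hhg
        have h5 : A.mul h g = A.one := by rw [← he]; exact Set.mem_singleton_iff.mp ht1
        have h6 := congrArg (fun x => A.mul x g) h5
        rwa [mul_cancel_right hA hg, hm.one_mul'] at h6
    · rw [Set.mem_singleton_iff.mp ht2, mul_one'' hm] at hc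
      rcases ht1 with ht1 | ht1
      · -- h·g = α = -(h·f)  ⇒ g = -f
        rw [ht1] at hc
        have he : α = A.mul h g := hm.zero_add'.mp hc
        apply hgnf
        have h6 := congrArg (fun x => A.mul x h) he
        simp only [hα] at h6
        rw [neg_mul'' hm, hm.mul_comm' h f, mul_cancel_right hA hh,
          hm.mul_comm' h g, mul_cancel_right hA hh] at h6
        exact h6.symm
      · -- h·g ∈ 1 + α ⇒ g ∈ h + (-f) ⇒ h ∈ f + g
        rw [Set.mem_singleton_iff.mp ht1] at hc
        have h6 := hm.distrib h hc
        rw [hm.one_mul', hm.mul_comm' h g, mul_cancel_right hA hh, hα,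
          neg_mul'' hm, hm.mul_comm' h f, mul_cancel_right hA hh] at h6
        -- h6 : g ∈ add h (neg f)
        have h7 := (hm.add_rev h6).1
        rw [neg_neg'' hm] at h7
        exact hmem (mem_add_comm hm h7)
  have hT2 : IsPre A (genUp A (genUp A {A.one} α) β) := isPre_genUp hA hT1 hβ0 hnβ
  have hαT2 : α ∈ genUp A (genUp A {A.one} α) β := subset_genUp hA hT1 hβ0 hαT1
  have hβT2 : β ∈ genUp A (genUp A {A.one} α) β := self_mem_genUp hA hT1 hβ0
  obtain ⟨T, hT, hsub, htot⟩ := exists_maximal_pre hA hT2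
  have hx := xOfPre_mem_XSet hA hT htot
  rcases hval _ hx with he | he
  · have h1 : xOfPre A T (A.mul h f) = -1 :=
      xOfPre_eq_neg_one (mul_ne_zero' hA hh hf) (notin_of_neg_mem hA hT (hsub hαT2))
    rw [x_mul hA hx hh hf, he, Int.units_mul_self] at h1
    exact absurd h1 (by decide)
  · have h1 : xOfPre A T (A.mul h g) = -1 :=
      xOfPre_eq_neg_one (mul_ne_zero' hA hh hg) (notin_of_neg_mem hA hT (hsub hβT2))
    rw [x_mul hA hx hh hg, he, Int.units_mul_self] at h1
    exact absurd h1 (by decide)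

end Pre2

end RRMF
namespace RRMF

variable {R : Type u} {A : MultiringData R}

lemma units_ne_neg (u : ℤˣ) : u ≠ -u := by
  rcases Int.units_eq_one_or u with h | h <;> rw [h] <;> decide

section Final
variable (hA : IsRealReducedMultifield A)
include hA

/-- the value set criterion -/
lemma aos_val_iff (σ γ τ : {t // t ∈ GSet A}) (f g : R)
    (hf : f ≠ A.zero) (hσ : ∀ x, σ.1 x = x.1 f)
    (hg : g ≠ A.zero) (hγ : ∀ x, γ.1 x = x.1 g) :
    AOSValue σ.1 γ.1 τ.1 ↔
      ∃ k : R, k ≠ A.zero ∧ (∀ x, τ.1 x = x.1 k) ∧ k ∈ A.add f g := by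
  constructor
  · intro hval
    obtain ⟨h, hh, hτ⟩ := τ.2
    refine ⟨h, hh, hτ, hard_rep hA hf hg hh ?_⟩
    intro x hx
    have := hval ⟨x, hx⟩
    rwa [hτ, hσ, hγ] at this
  · rintro ⟨k, hk, hτ, hkadd⟩ x
    have := easy_rep hA hf hg hk hkadd x.2
    rw [hτ, hσ, hγ]
    exact this

lemma isAOS_G : IsAOS (GSet A) := by
  have hm := hm' hA
  refine { nonempty := ?_, one_mem := ?_, mul_mem := ?_, negone_mem := ?_,
           separates := ?_, ax2 := ?_, ax3 := ?_ }
  · obtain ⟨x, hx⟩ := exists_x_mem_XSet hA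
    exact ⟨⟨x, hx⟩⟩
  · exact ⟨A.one, hA.1.one_ne_zero', fun x => (x_one hA x.2).symm⟩
  · rintro a b ⟨f, hf, hfa⟩ ⟨g, hg, hgb⟩
    refine ⟨A.mul f g, mul_ne_zero' hA hf hg, fun x => ?_⟩
    show a x * b x = x.1 (A.mul f g)
    rw [hfa x, hgb x, ← x_mul hA x.2 hf hg]
  · exact ⟨A.neg A.one, neg_one_ne_zero hA, fun x => (x.2.2.1).symm⟩
  · intro x y hxy
    have hne : x.1 ≠ y.1 := fun e => hxy (Subtype.ext e)
    obtain ⟨f, hf⟩ := Function.ne_iff.mp hne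
    have hf0 : f ≠ A.zero := by
      intro h0
      rw [h0, x.2.1.1, y.2.1.1] at hf
      exact hf rfl
    exact ⟨fun z => z.1 f, ⟨f, hf0, fun _ => rfl⟩, hf⟩
  · intro χ hmul hneg hclos
    classical
    set y : R → ℤˣ := fun f =>
      if h : f = A.zero then 1
      else χ ⟨fun x => x.1 f, f, h, fun _ => rfl⟩ with hy
    have hyval : ∀ (f : R) (h : f ≠ A.zero),
        y f = χ ⟨fun x => x.1 f, f, h, fun _ => rfl⟩ := by
      intro f h
      simp only [hy, dif_neg h]
    have hyX : y ∈ XSet A := by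
      refine ⟨⟨by simp only [hy, dif_pos rfl], ?_⟩, ?_, ?_⟩
      · -- multiplicativity
        intro a b ha hb
        have hab := mul_ne_zero' hA ha hb
        rw [hyval a ha, hyval b hb, hyval _ hab]
        have := hmul ⟨fun x => x.1 a, a, ha, fun _ => rfl⟩ ⟨fun x => x.1 b, b, hb, fun _ => rfl⟩
        rw [← this]
        congr 1
        apply Subtype.ext
        funext x
        exact x_mul hA x.2 ha hb
      · -- value at -1
        rw [hyval _ (neg_one_ne_zero hA), ← hneg]
        congr 1
        apply Subtype.ext
        funext x
        exact x.2.2.1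
      · -- closure of kernel
        rintro a b ⟨ha0, ha1⟩ ⟨hb0, hb1⟩ c hc hc0
        refine ⟨hc0, ?_⟩
        rw [hyval a ha0] at ha1
        rw [hyval b hb0] at hb1
        rw [hyval c hc0]
        refine hclos ⟨fun x => x.1 a, a, ha0, fun _ => rfl⟩
          ⟨fun x => x.1 b, b, hb0, fun _ => rfl⟩
          ⟨fun x => x.1 c, c, hc0, fun _ => rfl⟩ ha1 hb1 ?_
        intro x
        exact easy_rep hA ha0 hb0 hc0 hc x.2
    refine ⟨⟨y, hyX⟩, ?_⟩
    intro a
    obtain ⟨f, hf, hfa⟩ := a.2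
    have h1 : a.1 ⟨y, hyX⟩ = y f := hfa _
    rw [h1, hyval f hf]
    congr 1
    apply Subtype.ext
    funext x
    exact hfa x
  · -- AX3
    intro a b c r t h1 h2
    obtain ⟨fa, hfa, ha⟩ := a.2
    obtain ⟨fb, hfb, hb⟩ := b.2
    obtain ⟨fc, hfc, hc⟩ := c.2
    obtain ⟨k1, hk1, hr, hk1add⟩ := (aos_val_iff hA b c r fb fc hfb hb hfc hc).mp h2
    obtain ⟨k2, hk2, ht, hk2add⟩ := (aos_val_iff hA a r t fa k1 hfa ha hk1 hr).mp h1
    obtain ⟨s', hs'mem, hk2'⟩ := assoc2 hm hk1add hk2add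
    by_cases hs'0 : s' = A.zero
    · -- degenerate case : fb = -fa, any s works; take s := t
      rw [hs'0] at hs'mem
      have hbna : fb = A.neg fa := eq_neg_of_zero_mem hm hs'mem
      refine ⟨t, ?_, fun x => Or.inl rfl⟩
      intro x
      have hbx : b.1 x = -(a.1 x) := by
        rw [hb x, ha x, hbna, x_neg hA x.2 hfa]
      by_cases he : t.1 x = a.1 x
      · exact Or.inl he
      · right
        rw [hbx]
        rcases Int.units_eq_one_or (t.1 x) with h3 | h3 <;>
          rcases Int.units_eq_one_or (a.1 x) with h4 | h4 <;> simp_all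
    · refine ⟨⟨fun x => x.1 s', s', hs'0, fun _ => rfl⟩, ?_, ?_⟩
      · intro x
        have := easy_rep hA hfa hfb hs'0 hs'mem x.2
        show x.1 s' = a.1 x ∨ x.1 s' = b.1 x
        rw [ha x, hb x]
        exact this
      · intro x
        have := easy_rep hA hs'0 hfc hk2 hk2' x.2
        show t.1 x = x.1 s' ∨ t.1 x = c.1 x
        rw [ht x, hc x]
        exact this

end Final

end RRMF
/-- For a real reduced multifield `F`, the pair `(X, G)` built from the characters of `F` is
a space of orderings; moreover for `σ, γ ∈ G` with associated elements `f_σ, f_γ ∈ F∖{0}`,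
the value set satisfies `D(σ,γ) = {τ ∈ G : f_τ ∈ (f_σ + f_γ)∖{0}}`. -/
theorem real_reduced_multifield_to_aos {R : Type u} (A : MultiringData R)
    (hA : IsRealReducedMultifield A) :
    IsAOS (GSet A) ∧
    ∀ (σ γ τ : {t // t ∈ GSet A}) (f g : R),
      f ≠ A.zero → (∀ x, σ.1 x = x.1 f) → g ≠ A.zero → (∀ x, γ.1 x = x.1 g) →
      (AOSValue σ.1 γ.1 τ.1 ↔
        ∃ k : R, k ≠ A.zero ∧ (∀ x, τ.1 x = x.1 k) ∧ k ∈ A.add f g) := by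
  exact ⟨RRMF.isAOS_G hA, fun σ γ τ f g hf hσ hg hγ => RRMF.aos_val_iff hA σ γ τ f g hf hσ hg hγ⟩
end

section
/- The contravariant functor M (sending a space of orderings (X,G) to the real reduced multifield M(G)=G∪{0}, and an AOS-morphism α to the extension of the induced group homomorphism h↦h∘α) and the functor Spec (sending a real reduced multifield F to its associated space of orderings) form an equivalence between the opposite of the category of spaces of orderings and the category of real reduced multifields: M∘Spec ≅ Id and Spec∘M ≅ Id. -/
universe u v w

/-- A morphism of spaces of orderings `(X,G) → (Y,H)`: a map `α : X → Y` such that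
`h ∘ α ∈ G` for every `h ∈ H`. -/
def IsAOSMorphism {X : Type u} {Y : Type v} (G : Set (X → ℤˣ)) (H : Set (Y → ℤˣ))
    (α : X → Y) : Prop := ∀ k ∈ H, k ∘ α ∈ G

/-- An isomorphism of spaces of orderings: a bijective morphism whose induced group
homomorphism `h ↦ h ∘ α` is a bijection `H → G`. -/
def IsAOSIso {X : Type u} {Y : Type v} (G : Set (X → ℤˣ)) (H : Set (Y → ℤˣ))
    (α : X → Y) : Prop :=
  Function.Bijective α ∧ (∀ k ∈ H, k ∘ α ∈ G) ∧
    Set.BijOn (fun k : Y → ℤˣ => k ∘ α) H G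

open Classical in
/-- The canonical map `F → M(Spec(F))`, `0 ↦ 0` and `f ↦ σ_f` for `f ≠ 0`. -/
noncomputable def canonMFtoMSpec {R : Type u} (A : MultiringData R) :
    R → Option {τ // τ ∈ GSet A} :=
  fun f =>
    if hf : f = A.zero then none
    else some ⟨fun x => x.1 f, ⟨f, hf, fun _ => rfl⟩⟩

namespace AOSMF

universe x y

variable {R : Type x} {A : MultiringData R}

section Multiring
variable (h : IsMultiring A)
include h

lemma mem_zero_add (a : R) : a ∈ A.add A.zero a := h.zero_add'.mpr rfl

lemma zero_mem_add_neg (a : R) : A.zero ∈ A.add a (A.neg a) :=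
  (h.add_rev (mem_zero_add h a)).1

lemma neg_neg (a : R) : A.neg (A.neg a) = a :=
  h.zero_add'.mp (h.add_rev (zero_mem_add_neg h a)).1

lemma neg_zero : A.neg A.zero = A.zero :=
  h.zero_add'.mp (zero_mem_add_neg h A.zero)

lemma mul_one (a : R) : A.mul a A.one = a := by rw [h.mul_comm']; exact h.one_mul' a

lemma zero_mul (a : R) : A.mul A.zero a = A.zero := by
  rw [h.mul_comm']; exact h.mul_zero' a

lemma neg_mul (a b : R) : A.mul (A.neg a) b = A.neg (A.mul a b) := by
  have h0 : A.zero ∈ A.add (A.mul a b) (A.mul (A.neg a) b) := by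
    have := h.distrib b (zero_mem_add_neg h a)
    rwa [zero_mul h] at this
  have h2 := h.zero_add'.mp (h.add_rev h0).1
  calc A.mul (A.neg a) b = A.neg (A.neg (A.mul (A.neg a) b)) := (neg_neg h _).symm
    _ = A.neg (A.mul a b) := by rw [h2]

lemma mul_neg_one (a : R) : A.mul a (A.neg A.one) = A.neg a := by
  rw [h.mul_comm', neg_mul h, h.one_mul']

lemma neg_mem_add {a b c : R} (hc : c ∈ A.add a b) :
    A.neg c ∈ A.add (A.neg a) (A.neg b) := by
  have := h.distrib (A.neg A.one) hc
  rwa [mul_neg_one h, mul_neg_one h, mul_neg_one h] at this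

lemma neg_eq_zero {a : R} (ha : A.neg a = A.zero) : a = A.zero := by
  rw [← neg_neg h a, ha, neg_zero h]

lemma assoc_mem {a b c x t : R} (hx : x ∈ A.add a b) (ht : t ∈ A.add x c) :
    ∃ s ∈ A.add b c, t ∈ A.add a s := by
  have hm : t ∈ ⋃ t' ∈ A.add a b, A.add t' c := Set.mem_biUnion hx ht
  rw [h.add_assoc'] at hm
  simpa using hm

lemma assoc_mem' {a b c x t : R} (hx : x ∈ A.add b c) (ht : t ∈ A.add a x) :
    ∃ s ∈ A.add a b, t ∈ A.add s c := by
  have hm : t ∈ ⋃ s ∈ A.add b c, A.add a s := Set.mem_biUnion hx ht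
  rw [← h.add_assoc'] at hm
  simpa using hm

end Multiring

end AOSMF
namespace AOSMF
variable {R : Type x} {A : MultiringData R}

section RRMF
variable (hF : IsRealReducedMultifield A)
include hF

lemma msq {a : R} (ha : a ≠ A.zero) : A.mul a a = A.one := by
  have h := hF.1.toIsMultiring
  obtain ⟨b, hb⟩ := hF.1.inv a ha
  have hc := congrArg (fun t => A.mul t b) (hF.2.1 a)
  simp only [h.mul_assoc', hb, mul_one h] at hc
  exact hc

lemma mul_mul_cancel {a : R} (ha : a ≠ A.zero) (b : R) : A.mul (A.mul b a) a = b := by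
  have h := hF.1.toIsMultiring
  rw [h.mul_assoc', msq hF ha, mul_one h]

lemma mul_ne_zero {a b : R} (ha : a ≠ A.zero) (hb : b ≠ A.zero) : A.mul a b ≠ A.zero := by
  have h := hF.1.toIsMultiring
  intro hab
  apply ha
  have : A.mul (A.mul a b) b = a := mul_mul_cancel hF hb a
  rw [hab, zero_mul h] at this; exact this.symm

lemma one_mem_oo : A.one ∈ A.add A.one A.one := by
  obtain ⟨c, hc⟩ := hF.1.add_nonempty A.one A.one
  have := hF.2.2 c hc; rwa [this] at hc

lemma neg_one_ne_one : A.neg A.one ≠ A.one := by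
  have h := hF.1.toIsMultiring
  intro he
  have h0 : A.zero ∈ A.add A.one A.one := by
    have := zero_mem_add_neg h A.one; rwa [he] at this
  exact hF.1.one_ne_zero' (hF.2.2 A.zero h0).symm

lemma neg_one_ne_zero : A.neg A.one ≠ A.zero := by
  intro he; exact hF.1.one_ne_zero' (neg_eq_zero hF.1.toIsMultiring he)

lemma add_self_sub {a c : R} (ha : a ≠ A.zero) (hc : c ∈ A.add a a) : c = a := by
  have h := hF.1.toIsMultiring
  have hcz : c ≠ A.zero := by
    intro h0; subst h0
    have h1 := h.zero_add'.mp (h.add_rev hc).1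
    -- h1 : A.neg a = a
    have : A.neg A.one = A.one := by
      have h2 : A.mul (A.neg a) a = A.mul a a := by rw [h1]
      rw [neg_mul h, msq hF ha] at h2
      exact h2
    exact neg_one_ne_one hF this
  have h2 : A.mul c a ∈ A.add (A.mul a a) (A.mul a a) := h.distrib a hc
  rw [msq hF ha] at h2
  have h3 := hF.2.2 _ h2
  have := congrArg (fun t => A.mul t a) h3
  simpa [mul_mul_cancel hF ha, h.one_mul'] using this

lemma self_mem_add_self {a : R} : a ∈ A.add a a := by
  have h := hF.1.toIsMultiring
  have := h.distrib a (one_mem_oo hF)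
  rwa [h.one_mul'] at this

lemma absorb {u z c : R} (hz : z ∈ A.add A.one u) (hc : c ∈ A.add A.one z) :
    c ∈ A.add A.one u := by
  have h := hF.1.toIsMultiring
  obtain ⟨s, hs, hcs⟩ := assoc_mem' h hz hc
  rwa [hF.2.2 s hs] at hcs

lemma one_mem_add_one {u : R} (hu : u ≠ A.zero) : A.one ∈ A.add A.one u := by
  have h := hF.1.toIsMultiring
  by_cases hneg : u = A.neg A.one
  · subst hneg
    exact (h.add_rev (one_mem_oo hF)).1
  -- T := A.add A.one u
  have hT0 : A.zero ∉ A.add A.one u := by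
    intro h0
    have h1 := h.zero_add'.mp (h.add_rev h0).1
    exact hneg (by rw [← neg_neg h u, h1])
  have hmulu : ∀ z ∈ A.add A.one u, A.mul z u ∈ A.add A.one u := by
    intro z hz
    have := h.distrib u hz
    rwa [h.one_mul', msq hF hu, h.add_comm'] at this
  have haddu : ∀ z ∈ A.add A.one u, ∀ w ∈ A.add u z, w ∈ A.add A.one u := by
    intro z hz w hw
    have h1 : A.mul w u ∈ A.add A.one (A.mul z u) := by
      have := h.distrib u hw
      rwa [msq hF hu] at this
    have h2 : A.mul w u ∈ A.add A.one u := absorb hF (hmulu z hz) h1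
    have h3 := hmulu _ h2
    rwa [mul_mul_cancel hF hu] at h3
  have hsum : ∀ x ∈ A.add A.one u, ∀ z ∈ A.add A.one u, ∀ c ∈ A.add x z,
      c ∈ A.add A.one u := by
    intro x hx z hz c hc
    obtain ⟨s, hs, hcs⟩ := assoc_mem h hx hc
    exact absorb hF (haddu z hz s hs) hcs
  have hmul : ∀ x ∈ A.add A.one u, ∀ z ∈ A.add A.one u, A.mul x z ∈ A.add A.one u := by
    intro x hx z hz
    have h1 : A.mul z x ∈ A.add x (A.mul u x) := by
      have := h.distrib x hz
      rwa [h.one_mul'] at this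
    have h2 : A.mul u x ∈ A.add A.one u := by
      rw [h.mul_comm']; exact hmulu x hx
    rw [h.mul_comm']
    exact hsum x hx _ h2 _ h1
  obtain ⟨x, hx⟩ := hF.1.add_nonempty A.one u
  have hxz : x ≠ A.zero := fun h0 => hT0 (h0 ▸ hx)
  have := hmul x hx x hx
  rwa [msq hF hxz] at this

lemma univ_oneneg (c : R) : c ∈ A.add A.one (A.neg A.one) := by
  have h := hF.1.toIsMultiring
  by_cases hc : c = A.zero
  · subst hc; exact zero_mem_add_neg h A.one
  · have h1 := (h.add_rev (one_mem_add_one hF hc)).2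
    rwa [h.add_comm'] at h1

lemma add_neg_univ {a : R} (ha : a ≠ A.zero) (c : R) : c ∈ A.add a (A.neg a) := by
  have h := hF.1.toIsMultiring
  have h1 := h.distrib a (univ_oneneg hF (A.mul c a))
  rwa [h.one_mul', neg_mul h, h.one_mul', mul_mul_cancel hF ha] at h1

lemma mem_add_left {a b : R} (ha : a ≠ A.zero) (hb : b ≠ A.zero) : a ∈ A.add a b := by
  have h := hF.1.toIsMultiring
  have h1 := h.distrib a (one_mem_add_one hF (mul_ne_zero hF ha hb))
  rw [h.one_mul'] at h1
  have h2 : A.mul (A.mul a b) a = b := by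
    rw [h.mul_comm' a b]; exact mul_mul_cancel hF ha b
  rwa [h2] at h1

lemma mem_add_right {a b : R} (ha : a ≠ A.zero) (hb : b ≠ A.zero) : b ∈ A.add a b := by
  have h := hF.1.toIsMultiring
  rw [h.add_comm']; exact mem_add_left hF hb ha

lemma zero_mem_add_iff {a b : R} (hb : b ≠ A.zero) (h0 : A.zero ∈ A.add a b) :
    b = A.neg a := by
  have h := hF.1.toIsMultiring
  have h1 := (h.add_rev h0).2
  rw [h.add_comm'] at h1
  exact (h.zero_add'.mp h1).symm

end RRMF
end AOSMF
namespace AOSMF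
variable {R : Type x} {A : MultiringData R}

lemma zu_sq (u : ℤˣ) : u * u = 1 := by
  rcases Int.units_eq_one_or u with h | h <;> simp [h]

lemma zu_eq_iff (u v : ℤˣ) : u = v ↔ u * v = 1 := by
  rcases Int.units_eq_one_or u with h | h <;> rcases Int.units_eq_one_or v with h' | h' <;>
    simp [h, h']

lemma zu_ne_iff (u v : ℤˣ) : u ≠ v ↔ u * v = -1 := by
  rcases Int.units_eq_one_or u with h | h <;> rcases Int.units_eq_one_or v with h' | h' <;>
    simp [h, h']

lemma zu_cases (u : ℤˣ) : u = 1 ∨ u = -1 := Int.units_eq_one_or u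

section Chars
variable (hF : IsRealReducedMultifield A)
include hF

lemma sigma_one {σ : R → ℤˣ} (hσ : σ ∈ XSet A) : σ A.one = 1 := by
  have h := hF.1.toIsMultiring
  have h1 := hσ.1.2 A.one A.one hF.1.one_ne_zero' hF.1.one_ne_zero'
  rw [h.one_mul'] at h1
  rw [h1, zu_sq]

lemma sigma_neg {σ : R → ℤˣ} (hσ : σ ∈ XSet A) {a : R} (ha : a ≠ A.zero) :
    σ (A.neg a) = -σ a := by
  have h := hF.1.toIsMultiring
  have he : A.neg a = A.mul (A.neg A.one) a := by rw [neg_mul h, h.one_mul']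
  rw [he, hσ.1.2 _ _ (neg_one_ne_zero hF) ha, hσ.2.1]
  simp

lemma mem_Dv {σ : R → ℤˣ} (hσ : σ ∈ XSet A) {a b c : R} (ha : a ≠ A.zero)
    (hb : b ≠ A.zero) (hc : c ≠ A.zero) (hab : c ∈ A.add a b) :
    σ c = σ a ∨ σ c = σ b := by
  have h := hF.1.toIsMultiring
  by_contra hcon
  push_neg at hcon
  have hac : σ (A.mul a c) = -1 := by
    rw [hσ.1.2 a c ha hc, ← zu_ne_iff]
    exact fun he => hcon.1 he.symm
  have hbc : σ (A.mul b c) = -1 := by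
    rw [hσ.1.2 b c hb hc, ← zu_ne_iff]
    exact fun he => hcon.2 he.symm
  have h1 : A.one ∈ A.add (A.mul a c) (A.mul b c) := by
    have := h.distrib c hab
    rwa [msq hF hc] at this
  have h2 := neg_mem_add h h1
  have hkera : A.neg (A.mul a c) ∈ kerSet A σ := by
    refine ⟨fun h0 => mul_ne_zero hF ha hc (neg_eq_zero h h0), ?_⟩
    rw [sigma_neg hF hσ (mul_ne_zero hF ha hc), hac]; simp
  have hkerb : A.neg (A.mul b c) ∈ kerSet A σ := by
    refine ⟨fun h0 => mul_ne_zero hF hb hc (neg_eq_zero h h0), ?_⟩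
    rw [sigma_neg hF hσ (mul_ne_zero hF hb hc), hbc]; simp
  have h3 := hσ.2.2 _ _ hkera hkerb _ h2 (neg_one_ne_zero hF)
  have h4 := hσ.2.1
  rw [h3.2] at h4
  exact absurd h4 (by decide)

end Chars

/-- Preorderings. -/
def Pre (A : MultiringData R) (T : Set R) : Prop :=
  A.one ∈ T ∧ A.zero ∉ T ∧ A.neg A.one ∉ T ∧
  (∀ a ∈ T, ∀ b ∈ T, A.mul a b ∈ T) ∧
  (∀ a ∈ T, ∀ b ∈ T, ∀ c ∈ A.add a b, c ≠ A.zero → c ∈ T)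

/-- Extension of a preordering by an element. -/
def extSet (A : MultiringData R) (T : Set R) (a : R) : Set R :=
  {x | x ≠ A.zero ∧ ∃ t t', (t ∈ T ∨ t = A.zero) ∧ (t' ∈ T ∨ t' = A.zero) ∧
    x ∈ A.add t (A.mul a t')}

section Pre
variable (hF : IsRealReducedMultifield A)
include hF

lemma pre_one : Pre A {A.one} := by
  refine ⟨rfl, ?_, ?_, ?_, ?_⟩
  · exact fun h0 => hF.1.one_ne_zero' (Set.eq_of_mem_singleton h0).symm
  · exact fun h0 => neg_one_ne_one hF (Set.eq_of_mem_singleton h0)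
  · intro a ha b hb
    rw [Set.eq_of_mem_singleton ha, Set.eq_of_mem_singleton hb]
    exact Set.mem_singleton_iff.mpr ((hF.1.toIsMultiring).one_mul' A.one)
  · intro a ha b hb c hc _
    rw [Set.eq_of_mem_singleton ha, Set.eq_of_mem_singleton hb] at hc
    exact Set.mem_singleton_iff.mpr (hF.2.2 c hc)

lemma rearr {a x y z w u v c : R} (ha : a ≠ A.zero)
    (hu : u ∈ A.add x (A.mul a y)) (hv : v ∈ A.add (A.mul a z) w)
    (hc : c ∈ A.add u v) :
    ∃ s e, s ∈ A.add x w ∧ e ∈ A.add y z ∧ c ∈ A.add s (A.mul a e) := by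
  have h := hF.1.toIsMultiring
  obtain ⟨s₁, hs₁, hcs₁⟩ := assoc_mem h hu hc
  obtain ⟨w₁, hw₁, hs₁w⟩ := assoc_mem' h hv hs₁
  have he : A.mul w₁ a ∈ A.add y z := by
    have h1 := h.distrib a hw₁
    rwa [h.mul_comm' a y, mul_mul_cancel hF ha, h.mul_comm' a z, mul_mul_cancel hF ha] at h1
  have hw₁e : w₁ = A.mul a (A.mul w₁ a) := by
    rw [h.mul_comm' a (A.mul w₁ a)]
    exact (mul_mul_cancel hF ha w₁).symm
  rw [h.add_comm'] at hs₁w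
  obtain ⟨s, hs, hcs⟩ := assoc_mem' h hs₁w hcs₁
  exact ⟨s, A.mul w₁ a, hs, he, by rwa [← hw₁e]⟩

lemma Tz_mul {T : Set R} (hT : Pre A T) {t t' : R}
    (h1 : t ∈ T ∨ t = A.zero) (h2 : t' ∈ T ∨ t' = A.zero) :
    A.mul t t' ∈ T ∨ A.mul t t' = A.zero := by
  have h := hF.1.toIsMultiring
  rcases h1 with h1 | h1
  · rcases h2 with h2 | h2
    · exact Or.inl (hT.2.2.2.1 t h1 t' h2)
    · right; rw [h2]; exact h.mul_zero' t
  · right; rw [h1]; exact zero_mul h t'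

lemma Tz_add {T : Set R} (hT : Pre A T) {t t' c : R}
    (h1 : t ∈ T ∨ t = A.zero) (h2 : t' ∈ T ∨ t' = A.zero) (hc : c ∈ A.add t t') :
    c ∈ T ∨ c = A.zero := by
  have h := hF.1.toIsMultiring
  rcases h1 with h1 | h1
  · rcases h2 with h2 | h2
    · by_cases hcz : c = A.zero
      · exact Or.inr hcz
      · exact Or.inl (hT.2.2.2.2 t h1 t' h2 c hc hcz)
    · subst h2; rw [h.add_comm'] at hc
      rw [← h.zero_add'.mp hc]; exact Or.inl h1
  · subst h1
    rw [← h.zero_add'.mp hc]; exact h2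

lemma mem_extSet_self {T : Set R} (hT : Pre A T) {a : R} (ha : a ≠ A.zero) :
    a ∈ extSet A T a := by
  have h := hF.1.toIsMultiring
  refine ⟨ha, A.zero, A.one, Or.inr rfl, Or.inl hT.1, ?_⟩
  rw [mul_one h]
  exact mem_zero_add h a

lemma subset_extSet {T : Set R} (hT : Pre A T) (a : R) : T ⊆ extSet A T a := by
  have h := hF.1.toIsMultiring
  intro x hx
  refine ⟨fun h0 => hT.2.1 (h0 ▸ hx), x, A.zero, Or.inl hx, Or.inr rfl, ?_⟩
  rw [h.mul_zero', h.add_comm']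
  exact mem_zero_add h x

lemma negone_extSet {T : Set R} (hT : Pre A T) {a : R} (ha : a ≠ A.zero)
    (hm : A.neg A.one ∈ extSet A T a) : A.neg a ∈ T := by
  have h := hF.1.toIsMultiring
  obtain ⟨-, t, t', h1, h2, hmem⟩ := hm
  rcases h2 with h2 | h2
  · have ht'z : t' ≠ A.zero := fun h0 => hT.2.1 (h0 ▸ h2)
    rcases h1 with h1 | h1
    · -- general case
      have h3 : A.mul (A.neg A.one) t' ∈ A.add (A.mul t t') (A.mul (A.mul a t') t') :=
        h.distrib t' hmem
      rw [neg_mul h, h.one_mul', mul_mul_cancel hF ht'z] at h3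
      have h4 := (h.add_rev h3).2
      have h5 := neg_mem_add h h4
      rw [neg_neg h, neg_neg h] at h5
      have h6 : A.neg a ≠ A.zero := fun h0 => ha (neg_eq_zero h h0)
      exact hT.2.2.2.2 _ (hT.2.2.2.1 t h1 t' h2) _ h2 _ h5 h6
    · subst h1
      have h3 := h.zero_add'.mp hmem
      -- h3 : A.mul a t' = A.neg A.one
      have h4 : A.neg a = t' := by
        have := congrArg (fun z => A.mul z a) h3
        rw [h.mul_comm' a t', mul_mul_cancel hF ha, neg_mul h, h.one_mul'] at this
        rw [← this]
      rw [h4]; exact h2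
  · subst h2
    rw [h.mul_zero', h.add_comm'] at hmem
    have := h.zero_add'.mp hmem
    rcases h1 with h1 | h1
    · exact absurd (this ▸ h1) hT.2.2.1
    · exact absurd (this.symm.trans h1) (neg_one_ne_zero hF)

end Pre
end AOSMF
namespace AOSMF
variable {R : Type x} {A : MultiringData R}

section Pre2
variable (hF : IsRealReducedMultifield A)
include hF

lemma pre_ext {T : Set R} (hT : Pre A T) {a : R} (ha : a ≠ A.zero) (hna : A.neg a ∉ T) :
    Pre A (extSet A T a) := by
  have h := hF.1.toIsMultiring
  refine ⟨subset_extSet hF hT a hT.1, fun h0 => h0.1 rfl,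
    fun h0 => hna (negone_extSet hF hT ha h0), ?_, ?_⟩
  · rintro x ⟨hx0, t₁, t₂, ht₁, ht₂, hx⟩ y ⟨hy0, t₃, t₄, ht₃, ht₄, hy⟩
    refine ⟨mul_ne_zero hF hx0 hy0, ?_⟩
    have hu : A.mul y t₁ ∈ A.add (A.mul t₃ t₁) (A.mul a (A.mul t₄ t₁)) := by
      have h1 := h.distrib t₁ hy
      rwa [h.mul_assoc' a t₄ t₁] at h1
    have hv : A.mul y (A.mul a t₂) ∈ A.add (A.mul a (A.mul t₂ t₃)) (A.mul t₄ t₂) := by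
      have h1 := h.distrib (A.mul a t₂) hy
      have e1 : A.mul t₃ (A.mul a t₂) = A.mul a (A.mul t₂ t₃) := by
        rw [h.mul_comm' t₃ (A.mul a t₂), h.mul_assoc' a t₂ t₃]
      have e2 : A.mul (A.mul a t₄) (A.mul a t₂) = A.mul t₄ t₂ := by
        rw [h.mul_comm' (A.mul a t₄) (A.mul a t₂), ← h.mul_assoc' (A.mul a t₂) a t₄,
          h.mul_comm' a t₂, mul_mul_cancel hF ha t₂, h.mul_comm' t₂ t₄]
      rwa [e1, e2] at h1
    have hc : A.mul x y ∈ A.add (A.mul y t₁) (A.mul y (A.mul a t₂)) := by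
      have h1 := h.distrib y hx
      rwa [h.mul_comm' t₁ y, h.mul_comm' (A.mul a t₂) y] at h1
    obtain ⟨s, e, hs, he, hcm⟩ := rearr hF ha hu hv hc
    exact ⟨s, e, Tz_add hF hT (Tz_mul hF hT ht₃ ht₁) (Tz_mul hF hT ht₄ ht₂) hs,
      Tz_add hF hT (Tz_mul hF hT ht₄ ht₁) (Tz_mul hF hT ht₂ ht₃) he, hcm⟩
  · rintro x ⟨hx0, t₁, t₂, ht₁, ht₂, hx⟩ y ⟨hy0, t₃, t₄, ht₃, ht₄, hy⟩ c hc hcz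
    rw [h.add_comm'] at hy
    obtain ⟨s, e, hs, he, hcm⟩ := rearr hF ha hx hy hc
    exact ⟨hcz, s, e, Tz_add hF hT ht₁ ht₃ hs, Tz_add hF hT ht₂ ht₄ he, hcm⟩

lemma exists_ordering {T : Set R} (hT : Pre A T) :
    ∃ P, T ⊆ P ∧ Pre A P ∧ ∀ a, a ≠ A.zero → a ∈ P ∨ A.neg a ∈ P := by
  have h := hF.1.toIsMultiring
  have hzorn : ∀ c ⊆ {P | Pre A P ∧ T ⊆ P}, IsChain (· ⊆ ·) c → c.Nonempty →
      ∃ ub ∈ {P | Pre A P ∧ T ⊆ P}, ∀ s ∈ c, s ⊆ ub := by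
    intro c hcS hchain ⟨P₀, hP₀⟩
    refine ⟨⋃₀ c, ⟨⟨Set.mem_sUnion_of_mem (hcS hP₀).1.1 hP₀, ?_, ?_, ?_, ?_⟩, ?_⟩,
      fun s hs => Set.subset_sUnion_of_mem hs⟩
    · rintro ⟨P, hPc, hP⟩; exact (hcS hPc).1.2.1 hP
    · rintro ⟨P, hPc, hP⟩; exact (hcS hPc).1.2.2.1 hP
    · rintro x ⟨P₁, hP₁c, hx⟩ y ⟨P₂, hP₂c, hy⟩
      rcases eq_or_ne P₁ P₂ with he | hne
      · subst he; exact ⟨P₁, hP₁c, (hcS hP₁c).1.2.2.2.1 x hx y hy⟩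
      · rcases hchain hP₁c hP₂c hne with hsub | hsub
        · exact ⟨P₂, hP₂c, (hcS hP₂c).1.2.2.2.1 x (hsub hx) y hy⟩
        · exact ⟨P₁, hP₁c, (hcS hP₁c).1.2.2.2.1 x hx y (hsub hy)⟩
    · rintro x ⟨P₁, hP₁c, hx⟩ y ⟨P₂, hP₂c, hy⟩ d hd hdz
      rcases eq_or_ne P₁ P₂ with he | hne
      · subst he; exact ⟨P₁, hP₁c, (hcS hP₁c).1.2.2.2.2 x hx y hy d hd hdz⟩
      · rcases hchain hP₁c hP₂c hne with hsub | hsub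
        · exact ⟨P₂, hP₂c, (hcS hP₂c).1.2.2.2.2 x (hsub hx) y hy d hd hdz⟩
        · exact ⟨P₁, hP₁c, (hcS hP₁c).1.2.2.2.2 x hx y (hsub hy) d hd hdz⟩
    · exact fun t ht => Set.mem_sUnion_of_mem ((hcS hP₀).2 ht) hP₀
  obtain ⟨m, hTm, hm⟩ := zorn_subset_nonempty {P | Pre A P ∧ T ⊆ P} hzorn T ⟨hT, subset_rfl⟩
  refine ⟨m, hTm, hm.prop.1, ?_⟩
  intro a haz
  by_contra hcon
  push_neg at hcon
  have hext := pre_ext hF hm.prop.1 haz hcon.2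
  have hsub : extSet A m a ⊆ m :=
    hm.2 ⟨hext, hm.prop.2.trans (subset_extSet hF hm.prop.1 a)⟩
      (subset_extSet hF hm.prop.1 a)
  exact hcon.1 (hsub (mem_extSet_self hF hm.prop.1 haz))

end Pre2

open Classical in
/-- The character attached to an ordering. -/
noncomputable def sigOf (A : MultiringData R) (P : Set R) : R → ℤˣ :=
  fun f => if f ∈ P ∨ f = A.zero then 1 else -1

section Sig
variable (hF : IsRealReducedMultifield A) {P : Set R} (hP : Pre A P)
  (htot : ∀ a, a ≠ A.zero → a ∈ P ∨ A.neg a ∈ P)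
include hF hP

lemma pre_ne_zero {a : R} (haP : a ∈ P) : a ≠ A.zero := fun h0 => hP.2.1 (h0 ▸ haP)

lemma pre_disjoint {a : R} (haP : a ∈ P) : A.neg a ∉ P := by
  have h := hF.1.toIsMultiring
  intro hnaP
  have h1 := hP.2.2.2.1 _ hnaP _ haP
  rw [neg_mul h, msq hF (pre_ne_zero hF hP haP)] at h1
  exact hP.2.2.1 h1

lemma sig_of_mem {a : R} (haP : a ∈ P) : sigOf A P a = 1 := by
  unfold sigOf; rw [if_pos (Or.inl haP)]

lemma sig_of_not {a : R} (haz : a ≠ A.zero) (haP : a ∉ P) : sigOf A P a = -1 := by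
  unfold sigOf; rw [if_neg]; rintro (h | h); exacts [haP h, haz h]

lemma sig_one_iff {a : R} (haz : a ≠ A.zero) : sigOf A P a = 1 ↔ a ∈ P := by
  constructor
  · intro h1
    by_contra haP
    rw [sig_of_not hF hP haz haP] at h1
    exact absurd h1 (by decide)
  · exact sig_of_mem hF hP

include htot in
lemma sig_mem_XSet : sigOf A P ∈ XSet A := by
  have h := hF.1.toIsMultiring
  refine ⟨⟨by unfold sigOf; rw [if_pos (Or.inr rfl)], ?_⟩, ?_, ?_⟩
  · intro a b haz hbz
    by_cases haP : a ∈ P <;> by_cases hbP : b ∈ P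
    · rw [sig_of_mem hF hP haP, sig_of_mem hF hP hbP,
        sig_of_mem hF hP (hP.2.2.2.1 a haP b hbP)]; rfl
    · have : A.mul a b ∉ P := by
        intro hm
        apply hbP
        have h1 := hP.2.2.2.1 _ hm _ haP
        rw [h.mul_comm' a b, h.mul_assoc', msq hF haz, mul_one h] at h1
        exact h1
      rw [sig_of_mem hF hP haP, sig_of_not hF hP hbz hbP,
        sig_of_not hF hP (mul_ne_zero hF haz hbz) this]; rfl
    · have : A.mul a b ∉ P := by
        intro hm
        apply haP
        have h1 := hP.2.2.2.1 _ hm _ hbP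
        rw [h.mul_assoc', msq hF hbz, mul_one h] at h1
        exact h1
      rw [sig_of_not hF hP haz haP, sig_of_mem hF hP hbP,
        sig_of_not hF hP (mul_ne_zero hF haz hbz) this]; rfl
    · have hna := (htot a haz).resolve_left haP
      have hnb := (htot b hbz).resolve_left hbP
      have hm : A.mul a b ∈ P := by
        have h1 := hP.2.2.2.1 _ hna _ hnb
        have e : A.mul (A.neg a) (A.neg b) = A.mul a b := by
          rw [neg_mul h, h.mul_comm' a (A.neg b), neg_mul h, neg_neg h, h.mul_comm' b a]
        rwa [e] at h1
      rw [sig_of_mem hF hP hm, sig_of_not hF hP haz haP, sig_of_not hF hP hbz hbP]; rfl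
  · exact sig_of_not hF hP (neg_one_ne_zero hF) hP.2.2.1
  · rintro a b ⟨haz, ha1⟩ ⟨hbz, hb1⟩ c hc hcz
    have haP := (sig_one_iff hF hP haz).mp ha1
    have hbP := (sig_one_iff hF hP hbz).mp hb1
    exact ⟨hcz, (sig_one_iff hF hP hcz).mpr (hP.2.2.2.2 a haP b hbP c hc hcz)⟩

end Sig
end AOSMF
namespace AOSMF
variable {R : Type x} {A : MultiringData R}

section LG
variable (hF : IsRealReducedMultifield A)
include hF

lemma exists_sig_neg {c : R} (hc : c ≠ A.zero) (hc1 : c ≠ A.one) :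
    ∃ σ ∈ XSet A, σ c = -1 := by
  have h := hF.1.toIsMultiring
  have hncz : A.neg c ≠ A.zero := fun h0 => hc (neg_eq_zero h h0)
  have hnn : A.neg (A.neg c) ∉ ({A.one} : Set R) := by
    rw [neg_neg h]; exact fun h0 => hc1 (Set.eq_of_mem_singleton h0)
  have hpre := pre_ext hF (pre_one hF) hncz hnn
  obtain ⟨P, hTP, hP, htot⟩ := exists_ordering hF hpre
  have hncP : A.neg c ∈ P := hTP (mem_extSet_self hF (pre_one hF) hncz)
  have hcP : c ∉ P := by
    intro hm; exact pre_disjoint hF hP hm hncP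
  exact ⟨sigOf A P, sig_mem_XSet hF hP htot, sig_of_not hF hP hc hcP⟩

lemma xset_nonempty : ∃ σ, σ ∈ XSet A := by
  obtain ⟨P, _, hP, htot⟩ := exists_ordering hF (pre_one hF)
  exact ⟨sigOf A P, sig_mem_XSet hF hP htot⟩

lemma eq_one_of_sig {c : R} (hc : c ≠ A.zero) (hall : ∀ σ ∈ XSet A, σ c = 1) :
    c = A.one := by
  by_contra hc1
  obtain ⟨σ, hσ, hneg⟩ := exists_sig_neg hF hc hc1
  rw [hall σ hσ] at hneg; exact absurd hneg (by decide)

lemma lg_binary {p q : R} (hp : p ≠ A.zero) (hq : q ≠ A.zero)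
    (hall : ∀ σ ∈ XSet A, σ p = 1 ∨ σ q = 1) : A.one ∈ A.add p q := by
  have h := hF.1.toIsMultiring
  by_contra hno
  have hp1 : p ≠ A.one := by rintro rfl; exact hno (mem_add_left hF hF.1.one_ne_zero' hq)
  have hq1 : q ≠ A.one := by rintro rfl; exact hno (mem_add_right hF hp hF.1.one_ne_zero')
  have hnpz : A.neg p ≠ A.zero := fun h0 => hp (neg_eq_zero h h0)
  have hnqz : A.neg q ≠ A.zero := fun h0 => hq (neg_eq_zero h h0)
  have hT₁ := pre_ext hF (pre_one hF) hnpz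
    (by rw [neg_neg h]; exact fun h0 => hp1 (Set.eq_of_mem_singleton h0))
  have hqT₁ : q ∉ extSet A {A.one} (A.neg p) := by
    rintro ⟨-, t, t', ht, ht', hmem⟩
    rcases ht' with ht' | ht'
    · rw [Set.eq_of_mem_singleton ht', mul_one h] at hmem
      rcases ht with ht | ht
      · rw [Set.eq_of_mem_singleton ht] at hmem
        have h1 := (h.add_rev hmem).1
        rw [neg_neg h, h.add_comm'] at h1
        exact hno h1
      · rw [ht] at hmem
        have h1 := h.zero_add'.mp hmem
        rw [← h1] at hno
        exact hno (add_neg_univ hF hp A.one)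
    · rw [ht', h.mul_zero', h.add_comm'] at hmem
      have h1 := h.zero_add'.mp hmem
      rcases ht with ht | ht
      · exact hq1 (h1.symm.trans (Set.eq_of_mem_singleton ht))
      · exact hq ((h1.symm.trans ht))
  have hqT : A.neg (A.neg q) ∉ extSet A {A.one} (A.neg p) := by rw [neg_neg h]; exact hqT₁
  have hT₂ := pre_ext hF hT₁ hnqz hqT
  obtain ⟨P, hTP, hP, htot⟩ := exists_ordering hF hT₂
  have hnpP : A.neg p ∈ P :=
    hTP (subset_extSet hF hT₁ (A.neg q) (mem_extSet_self hF (pre_one hF) hnpz))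
  have hnqP : A.neg q ∈ P := hTP (mem_extSet_self hF hT₁ hnqz)
  rcases hall _ (sig_mem_XSet hF hP htot) with h1 | h1
  · exact pre_disjoint hF hP ((sig_one_iff hF hP hp).mp h1) hnpP
  · exact pre_disjoint hF hP ((sig_one_iff hF hP hq).mp h1) hnqP

lemma lg {a b c : R} (ha : a ≠ A.zero) (hb : b ≠ A.zero) (hc : c ≠ A.zero)
    (hall : ∀ σ ∈ XSet A, σ c = σ a ∨ σ c = σ b) : c ∈ A.add a b := by
  have h := hF.1.toIsMultiring
  have h1 : A.one ∈ A.add (A.mul c a) (A.mul c b) := by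
    refine lg_binary hF (mul_ne_zero hF hc ha) (mul_ne_zero hF hc hb) ?_
    intro σ hσ
    rcases hall σ hσ with he | he
    · left; rw [hσ.1.2 c a hc ha, ← zu_eq_iff]; exact he
    · right; rw [hσ.1.2 c b hc hb, ← zu_eq_iff]; exact he
  have h2 := h.distrib c h1
  rw [h.one_mul', h.mul_comm' c a, mul_mul_cancel hF hc a,
    h.mul_comm' c b, mul_mul_cancel hF hc b] at h2
  exact h2

end LG
end AOSMF
namespace AOSMF
variable {R : Type x} {A : MultiringData R}

section AOS2
variable (hF : IsRealReducedMultifield A)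
include hF

lemma gset_aos : IsAOS (GSet A) := by
  classical
  have h := hF.1.toIsMultiring
  refine ⟨?_, ⟨A.one, hF.1.one_ne_zero', fun x => (sigma_one hF x.2).symm⟩, ?_,
    ⟨A.neg A.one, neg_one_ne_zero hF, fun x => (x.2.2.1).symm⟩, ?_, ?_, ?_⟩
  · obtain ⟨σ, hσ⟩ := xset_nonempty hF; exact ⟨⟨σ, hσ⟩⟩
  · rintro a b ⟨f, hf, hfa⟩ ⟨g, hg, hgb⟩
    refine ⟨A.mul f g, mul_ne_zero hF hf hg, fun x => ?_⟩
    rw [Pi.mul_apply, hfa x, hgb x, x.2.1.2 f g hf hg]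
  · intro x y hxy
    have hne : x.1 ≠ y.1 := fun he => hxy (Subtype.ext he)
    have hex : ∃ f, x.1 f ≠ y.1 f := by
      by_contra hc; push_neg at hc; exact hne (funext hc)
    obtain ⟨f, hf⟩ := hex
    have hf0 : f ≠ A.zero := by
      rintro rfl; rw [x.2.1.1, y.2.1.1] at hf; exact hf rfl
    exact ⟨fun z => z.1 f, ⟨f, hf0, fun _ => rfl⟩, hf⟩
  · intro χ hmul hneg hclos
    set σ : R → ℤˣ :=
      fun f => if hf : f = A.zero then 1 else χ ⟨fun x => x.1 f, f, hf, fun _ => rfl⟩ with hσdef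
    have hev : ∀ (f : R) (hf : f ≠ A.zero),
        σ f = χ ⟨fun x => x.1 f, f, hf, fun _ => rfl⟩ := fun f hf => dif_neg hf
    have hσX : σ ∈ XSet A := by
      refine ⟨⟨dif_pos rfl, ?_⟩, ?_, ?_⟩
      · intro a b ha hb
        rw [hev a ha, hev b hb, hev (A.mul a b) (mul_ne_zero hF ha hb), ← hmul]
        exact congrArg χ (Subtype.ext (funext fun x => x.2.1.2 a b ha hb))
      · rw [hev (A.neg A.one) (neg_one_ne_zero hF), ← hneg]
        exact congrArg χ (Subtype.ext (funext fun x => x.2.2.1))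
      · rintro a b ⟨ha0, ha1⟩ ⟨hb0, hb1⟩ c hc hc0
        refine ⟨hc0, ?_⟩
        rw [hev a ha0] at ha1
        rw [hev b hb0] at hb1
        rw [hev c hc0]
        exact hclos ⟨fun x => x.1 a, a, ha0, fun _ => rfl⟩ ⟨fun x => x.1 b, b, hb0, fun _ => rfl⟩
          ⟨fun x => x.1 c, c, hc0, fun _ => rfl⟩ ha1 hb1
          (fun x => mem_Dv hF x.2 ha0 hb0 hc0 hc)
    refine ⟨⟨σ, hσX⟩, fun a => ?_⟩
    obtain ⟨f, hf0, hfa⟩ := a.2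
    have h1 : a = ⟨fun x => x.1 f, f, hf0, fun _ => rfl⟩ := Subtype.ext (funext hfa)
    rw [h1]
    exact (hev f hf0).symm
  · intro a b c r t hart hbcr
    obtain ⟨fa, hfa0, hfa⟩ := a.2
    obtain ⟨fb, hfb0, hfb⟩ := b.2
    obtain ⟨fc, hfc0, hfc⟩ := c.2
    obtain ⟨fr, hfr0, hfr⟩ := r.2
    obtain ⟨ft, hft0, hft⟩ := t.2
    have h1 : ft ∈ A.add fa fr := by
      refine lg hF hfa0 hfr0 hft0 fun σ hσ => ?_
      have := hart ⟨σ, hσ⟩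
      rwa [hft ⟨σ, hσ⟩, hfa ⟨σ, hσ⟩, hfr ⟨σ, hσ⟩] at this
    have h2 : fr ∈ A.add fb fc := by
      refine lg hF hfb0 hfc0 hfr0 fun σ hσ => ?_
      have := hbcr ⟨σ, hσ⟩
      rwa [hfr ⟨σ, hσ⟩, hfb ⟨σ, hσ⟩, hfc ⟨σ, hσ⟩] at this
    obtain ⟨s₀, hs₀, hts₀⟩ := assoc_mem' h h2 h1
    by_cases hsz : s₀ = A.zero
    · subst hsz
      have hbc : fc = ft := h.zero_add'.mp hts₀
      refine ⟨a, fun x => Or.inl rfl, fun x => Or.inr ?_⟩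
      rw [hft x, hfc x, hbc]
    · refine ⟨⟨fun x => x.1 s₀, s₀, hsz, fun _ => rfl⟩, fun x => ?_, fun x => ?_⟩
      · have := mem_Dv hF x.2 hfa0 hfb0 hsz hs₀
        rw [← hfa x, ← hfb x] at this
        exact this
      · have := mem_Dv hF x.2 hsz hfc0 hft0 hts₀
        rw [← hfc x, ← hft x] at this
        exact this

end AOS2
end AOSMF
namespace AOSMF
variable {R : Type x} {A : MultiringData R}

section Iso
variable (hF : IsRealReducedMultifield A)
include hF

lemma eval_inj {a b : R} (ha : a ≠ A.zero) (hb : b ≠ A.zero)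
    (he : ∀ σ ∈ XSet A, σ a = σ b) : a = b := by
  have h := hF.1.toIsMultiring
  have h1 : A.mul a b = A.one := by
    refine eq_one_of_sig hF (mul_ne_zero hF ha hb) fun σ hσ => ?_
    rw [hσ.1.2 a b ha hb, he σ hσ, zu_sq]
  have h2 : A.mul (A.mul a b) b = a := mul_mul_cancel hF hb a
  rw [h1, h.one_mul'] at h2
  exact h2.symm

lemma eval_neg {a b : R} (ha : a ≠ A.zero) (hb : b ≠ A.zero)
    (he : ∀ σ ∈ XSet A, σ a = -σ b) : b = A.neg a := by
  have h := hF.1.toIsMultiring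
  have hnb : A.neg b ≠ A.zero := fun h0 => hb (neg_eq_zero h h0)
  have h1 : a = A.neg b := by
    refine eval_inj hF ha hnb fun σ hσ => ?_
    rw [sigma_neg hF hσ hb]; exact he σ hσ
  rw [h1, neg_neg h]

omit hF in
lemma canon_zero : canonMFtoMSpec A A.zero = none := by
  simp [canonMFtoMSpec]

omit hF in
lemma canon_some {f : R} (hf : f ≠ A.zero) :
    canonMFtoMSpec A f = some ⟨fun x => x.1 f, f, hf, fun _ => rfl⟩ := by
  simp [canonMFtoMSpec, hf]

omit hF in
lemma canon_none_iff {f : R} : canonMFtoMSpec A f = none ↔ f = A.zero := by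
  constructor
  · intro h1
    by_contra hf
    rw [canon_some hf] at h1
    exact Option.some_ne_none _ h1
  · rintro rfl; exact canon_zero

omit hF in
lemma canon_some_elim {f : R} {g : {τ // τ ∈ GSet A}}
    (hfg : canonMFtoMSpec A f = some g) : f ≠ A.zero ∧ g.1 = fun x => x.1 f := by
  have hf : f ≠ A.zero := by
    rintro rfl; rw [canon_zero] at hfg; exact nomatch hfg
  rw [canon_some hf] at hfg
  exact ⟨hf, by rw [← Option.some_inj.mp hfg]⟩

lemma canon_injective : Function.Injective (canonMFtoMSpec A) := by
  intro f g hfg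
  by_cases hf : f = A.zero
  · subst hf
    rw [canon_zero] at hfg
    exact (canon_none_iff.mp hfg.symm).symm
  · have hg : g ≠ A.zero := by
      rintro rfl; rw [canon_zero] at hfg
      exact hf (canon_none_iff.mp hfg)
    rw [canon_some hf, canon_some hg] at hfg
    have h1 := congrArg (fun o => Option.getD (Option.map Subtype.val o) (fun _ => 1)) hfg
    simp only [Option.map_some, Option.getD_some] at h1
    refine eval_inj hF hf hg fun σ hσ => ?_
    exact congrFun h1 ⟨σ, hσ⟩

lemma canon_iso (h' : IsAOS (GSet A)) :
    IsMultiringIso A (MofAOS h') (canonMFtoMSpec A) := by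
  have h := hF.1.toIsMultiring
  refine ⟨⟨?_, ?_, canon_zero, ?_, ?_⟩, ⟨canon_injective hF, ?_⟩, ?_⟩
  · -- map_add
    intro a b c hc
    by_cases ha : a = A.zero
    · subst ha
      have hbc : b = c := h.zero_add'.mp hc
      exact Or.inl ⟨canon_zero, by rw [hbc]⟩
    by_cases hb : b = A.zero
    · subst hb
      rw [h.add_comm'] at hc
      have hac : a = c := h.zero_add'.mp hc
      exact Or.inr (Or.inl ⟨canon_zero, by rw [hac]⟩)
    by_cases hba : b = A.neg a
    · refine Or.inr (Or.inr (Or.inl ⟨⟨fun x => x.1 a, a, ha, fun _ => rfl⟩,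
        ⟨fun x => x.1 b, b, hb, fun _ => rfl⟩, canon_some ha, canon_some hb, ?_⟩))
      funext x
      subst hba
      show x.1 a = -(x.1 (A.neg a))
      rw [sigma_neg hF x.2 ha, _root_.neg_neg]
    · have hcz : c ≠ A.zero := by
        rintro rfl
        exact hba (zero_mem_add_iff hF hb hc)
      refine Or.inr (Or.inr (Or.inr ⟨⟨fun x => x.1 a, a, ha, fun _ => rfl⟩,
        ⟨fun x => x.1 b, b, hb, fun _ => rfl⟩, ⟨fun x => x.1 c, c, hcz, fun _ => rfl⟩,
        canon_some ha, canon_some hb, ?_, canon_some hcz,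
        fun x => mem_Dv hF x.2 ha hb hcz hc⟩))
      intro hee
      have h1 : ∀ σ ∈ XSet A, σ a = -σ b := by
        intro σ hσ
        have := congrFun hee ⟨σ, hσ⟩
        simpa using this
      exact hba (eval_neg hF ha hb h1)
  · -- map_neg
    intro a
    by_cases ha : a = A.zero
    · subst ha
      rw [neg_zero h, canon_zero]
      rfl
    · have hna : A.neg a ≠ A.zero := fun h0 => ha (neg_eq_zero h h0)
      rw [canon_some hna, canon_some ha]
      show _ = some _
      refine congrArg some (Subtype.ext (funext fun x => ?_))
      show x.1 (A.neg a) = (fun _ => (-1 : ℤˣ)) x * x.1 a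
      rw [sigma_neg hF x.2 ha]
      simp
  · -- map_mul
    intro a b
    by_cases ha : a = A.zero
    · subst ha
      rw [zero_mul h, canon_zero]
      rcases Option.eq_none_or_eq_some (canonMFtoMSpec A b) with hcb | ⟨g, hcb⟩ <;> rw [hcb] <;> rfl
    by_cases hb : b = A.zero
    · subst hb
      rw [h.mul_zero', canon_zero]
      rcases Option.eq_none_or_eq_some (canonMFtoMSpec A a) with hca | ⟨g, hca⟩ <;> rw [hca] <;> rfl
    · rw [canon_some ha, canon_some hb, canon_some (mul_ne_zero hF ha hb)]
      show some _ = some _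
      exact congrArg some (Subtype.ext (funext fun x => x.2.1.2 a b ha hb))
  · -- map_one
    rw [canon_some hF.1.one_ne_zero']
    show some _ = some _
    exact congrArg some (Subtype.ext (funext fun x => sigma_one hF x.2))
  · -- surjective
    rintro (_ | ⟨τ, hτ⟩)
    · exact ⟨A.zero, canon_zero⟩
    · obtain ⟨f, hf, hfτ⟩ := hτ
      refine ⟨f, ?_⟩
      rw [canon_some hf]
      exact congrArg some (Subtype.ext (funext fun x => (hfτ x).symm))
  · -- add reflection
    intro a b c hmem
    rcases hmem with ⟨h1, h2⟩ | ⟨h1, h2⟩ | ⟨g, k, hga, hkb, hgk⟩ | ⟨g, k, m, hga, hkb, hne, hcm, hAOS⟩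
    · have ha : a = A.zero := canon_none_iff.mp h1
      have hcb : c = b := canon_injective hF h2
      subst ha
      exact h.zero_add'.mpr hcb.symm
    · have hb : b = A.zero := canon_none_iff.mp h1
      have hca : c = a := canon_injective hF h2
      subst hb
      rw [h.add_comm']
      exact h.zero_add'.mpr hca.symm
    · obtain ⟨ha, hg⟩ := canon_some_elim hga
      obtain ⟨hb, hk⟩ := canon_some_elim hkb
      have hba : b = A.neg a := by
        refine eval_neg hF ha hb fun σ hσ => ?_
        have := congrFun hgk ⟨σ, hσ⟩
        rw [hg, hk] at this
        simpa using this
      rw [hba]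
      exact add_neg_univ hF ha c
    · obtain ⟨ha, hg⟩ := canon_some_elim hga
      obtain ⟨hb, hk⟩ := canon_some_elim hkb
      obtain ⟨hc, hm⟩ := canon_some_elim hcm
      refine lg hF ha hb hc fun σ hσ => ?_
      have := hAOS ⟨σ, hσ⟩
      rw [hg, hk, hm] at this
      exact this

end Iso
end AOSMF
namespace AOSMF

lemma zu_ne_eq_neg {u v : ℤˣ} (huv : u ≠ v) : u = -v := by
  rcases Int.units_eq_one_or u with h | h <;> rcases Int.units_eq_one_or v with h' | h' <;>
    subst h <;> subst h' <;> simp_all <;> rfl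

lemma zu_or (u : ℤˣ) {v w : ℤˣ} (hvw : v ≠ w) : u = v ∨ u = w := by
  rcases Int.units_eq_one_or u with h | h <;> rcases Int.units_eq_one_or v with h' | h' <;>
    rcases Int.units_eq_one_or w with h'' | h'' <;> subst h <;> subst h' <;> subst h'' <;>
    simp_all

section MG
variable {X : Type x} {G : Set (X → ℤˣ)} (h : IsAOS G)

/-- Negation on `G`. -/
def negG (g : {a : X → ℤˣ // a ∈ G}) : {a : X → ℤˣ // a ∈ G} :=
  ⟨(fun _ => (-1 : ℤˣ)) * g.1, h.mul_mem h.negone_mem g.2⟩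

lemma negG_apply (g : {a : X → ℤˣ // a ∈ G}) (x : X) :
    (negG h g).1 x = -(g.1 x) := neg_one_mul _

lemma negG_eq_neg (g : {a : X → ℤˣ // a ∈ G}) : (negG h g).1 = -g.1 :=
  funext fun x => negG_apply h g x

lemma fun_neg_symm {g k : X → ℤˣ} (he : g = -k) : k = -g := by
  rw [he, _root_.neg_neg]

lemma Mneg_some (g : {a : X → ℤˣ // a ∈ G}) :
    (MofAOS h).neg (some g) = some (negG h g) := rfl

lemma Mneg_none : (MofAOS h).neg none = none := rfl

lemma mem_MaddNL {b c : Option {a : X → ℤˣ // a ∈ G}} :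
    c ∈ (MofAOS h).add none b ↔ c = b := by
  constructor
  · rintro (⟨-, h2⟩ | ⟨h1, h2⟩ | ⟨g, k, hg, -⟩ | ⟨g, k, m, hg, -⟩)
    · exact h2
    · exact h2.trans h1.symm
    · exact nomatch hg
    · exact nomatch hg
  · rintro rfl; exact Or.inl ⟨rfl, rfl⟩

lemma mem_MaddNR {a c : Option {a : X → ℤˣ // a ∈ G}} :
    c ∈ (MofAOS h).add a none ↔ c = a := by
  constructor
  · rintro (⟨h1, h2⟩ | ⟨-, h2⟩ | ⟨g, k, -, hk, -⟩ | ⟨g, k, m, -, hk, -⟩)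
    · exact h2.trans h1.symm
    · exact h2
    · exact nomatch hk
    · exact nomatch hk
  · rintro rfl; exact Or.inr (Or.inl ⟨rfl, rfl⟩)

lemma mem_Madd_ss {g k : {a : X → ℤˣ // a ∈ G}} {c : Option {a : X → ℤˣ // a ∈ G}} :
    c ∈ (MofAOS h).add (some g) (some k) ↔
      g.1 = -k.1 ∨ (g.1 ≠ -k.1 ∧ ∃ m, c = some m ∧ AOSValue g.1 k.1 m.1) := by
  constructor
  · rintro (⟨h1, -⟩ | ⟨h1, -⟩ | ⟨g', k', hg, hk, he⟩ | ⟨g', k', m, hg, hk, hne, hc, hv⟩)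
    · exact nomatch h1
    · exact nomatch h1
    · cases Option.some_inj.mp hg; cases Option.some_inj.mp hk; exact Or.inl he
    · cases Option.some_inj.mp hg; cases Option.some_inj.mp hk
      exact Or.inr ⟨hne, m, hc, hv⟩
  · rintro (he | ⟨hne, m, hc, hv⟩)
    · exact Or.inr (Or.inr (Or.inl ⟨g, k, rfl, rfl, he⟩))
    · exact Or.inr (Or.inr (Or.inr ⟨g, k, m, rfl, rfl, hne, hc, hv⟩))

lemma Mmul_some (g k : {a : X → ℤˣ // a ∈ G}) :
    (MofAOS h).mul (some g) (some k) = some ⟨g.1 * k.1, h.mul_mem g.2 k.2⟩ := rfl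

lemma Mmul_none_left (b : Option {a : X → ℤˣ // a ∈ G}) :
    (MofAOS h).mul none b = none := by cases b <;> rfl

lemma Mmul_none_right (a : Option {a : X → ℤˣ // a ∈ G}) :
    (MofAOS h).mul a none = none := by cases a <;> rfl

lemma aos_refl_left (a b : X → ℤˣ) : AOSValue a b a := fun _ => Or.inl rfl

lemma aos_refl_right (a b : X → ℤˣ) : AOSValue a b b := fun _ => Or.inr rfl

lemma aos_symm {a b c : X → ℤˣ} (hv : AOSValue a b c) : AOSValue b a c :=
  fun x => (hv x).symm

lemma mem_Madd_self {g : {a : X → ℤˣ // a ∈ G}} (b : Option {a : X → ℤˣ // a ∈ G}) :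
    some g ∈ (MofAOS h).add (some g) b := by
  cases b with
  | none => exact (mem_MaddNR h).mpr rfl
  | some k =>
    rw [mem_Madd_ss h]
    by_cases he : g.1 = -k.1
    · exact Or.inl he
    · exact Or.inr ⟨he, g, rfl, aos_refl_left _ _⟩

lemma mem_Madd_neg (g : {a : X → ℤˣ // a ∈ G}) (c : Option {a : X → ℤˣ // a ∈ G}) :
    c ∈ (MofAOS h).add (some g) (some (negG h g)) := by
  rw [mem_Madd_ss h]
  exact Or.inl (by rw [negG_eq_neg, _root_.neg_neg])

end MG
end AOSMF
namespace AOSMF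
section MG2
variable {X : Type x} {G : Set (X → ℤˣ)} (h : IsAOS G)

lemma mg_add_comm (a b : Option {a : X → ℤˣ // a ∈ G}) :
    (MofAOS h).add a b = (MofAOS h).add b a := by
  ext c
  cases a with
  | none =>
    cases b with
    | none => exact Iff.rfl
    | some k => rw [mem_MaddNL h, mem_MaddNR h]
  | some g =>
    cases b with
    | none => rw [mem_MaddNR h, mem_MaddNL h]
    | some k =>
      rw [mem_Madd_ss h, mem_Madd_ss h]
      constructor
      · rintro (he | ⟨hne, m, hc, hv⟩)
        · exact Or.inl (fun_neg_symm he)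
        · exact Or.inr ⟨fun he' => hne (fun_neg_symm he'), m, hc, aos_symm hv⟩
      · rintro (he | ⟨hne, m, hc, hv⟩)
        · exact Or.inl (fun_neg_symm he)
        · exact Or.inr ⟨fun he' => hne (fun_neg_symm he'), m, hc, aos_symm hv⟩

lemma mg_add_rev {a b d : Option {a : X → ℤˣ // a ∈ G}} (hd : d ∈ (MofAOS h).add a b) :
    a ∈ (MofAOS h).add d ((MofAOS h).neg b) ∧ b ∈ (MofAOS h).add ((MofAOS h).neg a) d := by
  cases a with
  | none =>
    rw [mem_MaddNL h] at hd; subst hd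
    constructor
    · cases d with
      | none => exact (mem_MaddNL h).mpr rfl
      | some k => rw [Mneg_some h]; exact mem_Madd_neg h k none
    · rw [Mneg_none h]; exact (mem_MaddNL h).mpr rfl
  | some g =>
    cases b with
    | none =>
      rw [mem_MaddNR h] at hd; subst hd
      constructor
      · rw [Mneg_none h]; exact (mem_MaddNR h).mpr rfl
      · rw [Mneg_some h, mem_Madd_ss h]
        exact Or.inl (by rw [negG_eq_neg])
    | some k =>
      rw [mem_Madd_ss h] at hd
      rcases hd with he | ⟨hne, m, hc, hv⟩
      · constructor
        · rw [Mneg_some h]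
          cases d with
          | none =>
            rw [mem_MaddNL h]
            exact congrArg some (Subtype.ext (he.trans (negG_eq_neg h k).symm))
          | some m =>
            rw [mem_Madd_ss h]
            by_cases hm : m.1 = -(negG h k).1
            · exact Or.inl hm
            · refine Or.inr ⟨hm, g, rfl, fun x => Or.inr ?_⟩
              rw [negG_apply]
              exact congrFun he x
        · rw [Mneg_some h]
          have hk : k.1 = -g.1 := fun_neg_symm he
          cases d with
          | none =>
            rw [mem_MaddNR h]
            exact congrArg some (Subtype.ext (hk.trans (negG_eq_neg h g).symm))
          | some m =>
            rw [mem_Madd_ss h]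
            by_cases hm : (negG h g).1 = -m.1
            · exact Or.inl hm
            · refine Or.inr ⟨hm, k, rfl, fun x => Or.inl ?_⟩
              rw [negG_apply]
              exact congrFun hk x
      · subst hc
        constructor
        · rw [Mneg_some h, mem_Madd_ss h]
          by_cases hm : m.1 = -(negG h k).1
          · exact Or.inl hm
          · refine Or.inr ⟨hm, g, rfl, fun x => ?_⟩
            rcases hv x with h1 | h1
            · exact Or.inl h1.symm
            · by_cases hgk : g.1 x = k.1 x
              · exact Or.inl (hgk.trans h1.symm)
              · refine Or.inr ?_
                rw [negG_apply]
                exact zu_ne_eq_neg hgk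
        · rw [Mneg_some h, mem_Madd_ss h]
          by_cases hm : (negG h g).1 = -m.1
          · exact Or.inl hm
          · refine Or.inr ⟨hm, k, rfl, fun x => ?_⟩
            rcases hv x with h1 | h1
            · by_cases hkg : k.1 x = g.1 x
              · exact Or.inr (hkg.trans h1.symm)
              · refine Or.inl ?_
                rw [negG_apply]
                exact zu_ne_eq_neg hkg
            · exact Or.inr h1.symm

lemma mg_assoc_mem {a b c t x' : Option {a : X → ℤˣ // a ∈ G}}
    (ht : t ∈ (MofAOS h).add a b) (hx : x' ∈ (MofAOS h).add t c) :
    ∃ s, s ∈ (MofAOS h).add b c ∧ x' ∈ (MofAOS h).add a s := by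
  cases a with
  | none =>
    rw [mem_MaddNL h] at ht; subst ht
    exact ⟨x', hx, (mem_MaddNL h).mpr rfl⟩
  | some ga =>
    cases b with
    | none =>
      rw [mem_MaddNR h] at ht; subst ht
      exact ⟨c, (mem_MaddNL h).mpr rfl, hx⟩
    | some gb =>
      cases c with
      | none =>
        rw [mem_MaddNR h] at hx; subst hx
        exact ⟨some gb, (mem_MaddNR h).mpr rfl, ht⟩
      | some gc =>
        rw [mem_Madd_ss h] at ht
        rcases ht with he | ⟨hne, gt, htm, hvt⟩
        · refine ⟨some (negG h ga), ?_, mem_Madd_neg h ga x'⟩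
          rw [mem_Madd_ss h]
          by_cases hbc : gb.1 = -gc.1
          · exact Or.inl hbc
          · refine Or.inr ⟨hbc, negG h ga, rfl, fun x => Or.inl ?_⟩
            rw [negG_apply, congrFun he x]
            simp
        · subst htm
          rw [mem_Madd_ss h] at hx
          rcases hx with he2 | ⟨hne2, gx, hxm, hvx⟩
          · refine ⟨some (negG h ga), ?_, mem_Madd_neg h ga x'⟩
            rw [mem_Madd_ss h]
            by_cases hbc : gb.1 = -gc.1
            · exact Or.inl hbc
            · refine Or.inr ⟨hbc, negG h ga, rfl, fun x => ?_⟩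
              rw [negG_apply]
              by_cases hbcx : gb.1 x = gc.1 x
              · rcases hvt x with h1 | h1
                · refine Or.inr ?_
                  rw [← h1, congrFun he2 x]
                  simp
                · exfalso
                  have h2 := congrFun he2 x
                  simp only [Pi.neg_apply] at h2
                  rw [h1, ← hbcx] at h2
                  rcases zu_cases (gb.1 x) with h3 | h3 <;> rw [h3] at h2 <;>
                    exact absurd h2 (by decide)
              · exact zu_or _ hbcx
          · subst hxm
            obtain ⟨s, hs1, hs2⟩ := h.ax3 gc gb ga gt gx (aos_symm hvx) (aos_symm hvt)
            refine ⟨some s, ?_, ?_⟩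
            · rw [mem_Madd_ss h]
              by_cases hbc : gb.1 = -gc.1
              · exact Or.inl hbc
              · exact Or.inr ⟨hbc, s, rfl, aos_symm hs1⟩
            · rw [mem_Madd_ss h]
              by_cases has : ga.1 = -s.1
              · exact Or.inl has
              · exact Or.inr ⟨has, gx, rfl, fun x => (hs2 x).symm⟩

lemma mg_add_assoc (a b c : Option {a : X → ℤˣ // a ∈ G}) :
    (⋃ t ∈ (MofAOS h).add a b, (MofAOS h).add t c) =
      ⋃ s ∈ (MofAOS h).add b c, (MofAOS h).add a s := by
  apply Set.Subset.antisymm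
  · intro x hx
    rw [Set.mem_iUnion₂] at hx ⊢
    obtain ⟨t, ht, hxt⟩ := hx
    obtain ⟨s, hs, hxs⟩ := mg_assoc_mem h ht hxt
    exact ⟨s, hs, hxs⟩
  · intro x hx
    rw [Set.mem_iUnion₂] at hx ⊢
    obtain ⟨s, hs, hxs⟩ := hx
    rw [mg_add_comm h] at hxs
    rw [mg_add_comm h] at hs
    obtain ⟨u, hu, hxu⟩ := mg_assoc_mem h hs hxs
    rw [mg_add_comm h] at hu
    rw [mg_add_comm h] at hxu
    exact ⟨u, hu, hxu⟩

lemma mg_multiring : IsMultiring (MofAOS h) := by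
  constructor
  · -- add_nonempty
    intro a b
    cases a with
    | none => exact ⟨b, (mem_MaddNL h).mpr rfl⟩
    | some g => exact ⟨some g, mem_Madd_self h b⟩
  · exact mg_add_comm h
  · exact fun hd => mg_add_rev h hd
  · -- zero_add'
    intro a c
    rw [show (MofAOS h).zero = none from rfl, mem_MaddNL h]
    exact eq_comm
  · exact mg_add_assoc h
  · -- mul_comm
    intro a b
    cases a with
    | none => rw [Mmul_none_left h, Mmul_none_right h]
    | some g =>
      cases b with
      | none => rw [Mmul_none_left h, Mmul_none_right h]
      | some k => exact congrArg some (Subtype.ext (mul_comm g.1 k.1))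
  · -- mul_assoc
    intro a b c
    cases a <;> cases b <;> cases c <;>
      first
        | rfl
        | exact congrArg some (Subtype.ext (mul_assoc _ _ _))
  · -- one_mul
    intro a
    cases a with
    | none => rfl
    | some g => exact congrArg some (Subtype.ext (one_mul g.1))
  · -- mul_zero
    intro a
    cases a <;> rfl
  · -- distrib
    intro d a b c hc
    cases d with
    | none =>
      rw [Mmul_none_right h, Mmul_none_right h, Mmul_none_right h]
      exact (mem_MaddNL h).mpr rfl
    | some gd =>
      cases a with
      | none =>
        rw [mem_MaddNL h] at hc; subst hc
        rw [Mmul_none_left h]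
        exact (mem_MaddNL h).mpr rfl
      | some ga =>
        cases b with
        | none =>
          rw [mem_MaddNR h] at hc; subst hc
          rw [Mmul_none_left h]
          exact (mem_MaddNR h).mpr rfl
        | some gb =>
          rw [mem_Madd_ss h] at hc
          rcases hc with he | ⟨hne, m, hcm, hv⟩
          · rw [Mmul_some h, Mmul_some h, mem_Madd_ss h]
            refine Or.inl (funext fun x => ?_)
            show ga.1 x * gd.1 x = -(gb.1 x * gd.1 x)
            rw [congrFun he x]
            simp
          · subst hcm
            rw [Mmul_some h, Mmul_some h, Mmul_some h, mem_Madd_ss h]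
            refine Or.inr ⟨?_, ⟨m.1 * gd.1, h.mul_mem m.2 gd.2⟩, rfl, fun x => ?_⟩
            · intro he
              apply hne
              funext x
              have h2 := congrFun he x
              simp only [Pi.mul_apply, Pi.neg_apply] at h2
              show ga.1 x = -(gb.1 x)
              calc ga.1 x = ga.1 x * gd.1 x * gd.1 x := by
                    rw [mul_assoc, zu_sq, _root_.mul_one]
                _ = -(gb.1 x * gd.1 x) * gd.1 x := by rw [h2]
                _ = -(gb.1 x) := by rw [_root_.neg_mul, mul_assoc, zu_sq, _root_.mul_one]
            · rcases hv x with h1 | h1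
              · exact Or.inl (by show m.1 x * gd.1 x = ga.1 x * gd.1 x; rw [h1])
              · exact Or.inr (by show m.1 x * gd.1 x = gb.1 x * gd.1 x; rw [h1])

lemma mg_rrmf : IsRealReducedMultifield (MofAOS h) := by
  refine ⟨⟨mg_multiring h, ?_, ?_⟩, ?_, ?_⟩
  · exact fun he => nomatch he
  · intro a ha
    cases a with
    | none => exact absurd rfl ha
    | some g =>
      refine ⟨some g, ?_⟩
      rw [Mmul_some h]
      exact congrArg some (Subtype.ext (funext fun x => zu_sq (g.1 x)))
  · intro a
    cases a with
    | none => rfl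
    | some g =>
      rw [Mmul_some h, Mmul_some h]
      exact congrArg some (Subtype.ext (funext fun x => by
        show g.1 x * g.1 x * g.1 x = g.1 x
        rw [zu_sq, one_mul]))
  · intro a ha
    rw [show (MofAOS h).one = some ⟨fun _ => 1, h.one_mem⟩ from rfl, mem_Madd_ss h] at ha
    rcases ha with he | ⟨-, m, ham, hv⟩
    · exfalso
      obtain ⟨x₀⟩ := h.nonempty
      have h2 : (1 : ℤˣ) = -1 := congrFun he x₀
      exact absurd h2 (by decide)
    · subst ham
      refine congrArg some (Subtype.ext (funext fun x => ?_))
      rcases hv x with h1 | h1 <;> exact h1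

end MG2
end AOSMF
namespace AOSMF
section MG3
variable {X : Type x} {G : Set (X → ℤˣ)} (h : IsAOS G)

/-- The evaluation character at a point. -/
def sigX (x : X) : Option {a : X → ℤˣ // a ∈ G} → ℤˣ :=
  fun o => o.elim 1 (fun g => g.1 x)

lemma sigX_mem (x : X) : sigX (G := G) x ∈ XSet (MofAOS h) := by
  refine ⟨⟨rfl, ?_⟩, ?_, ?_⟩
  · intro a b ha hb
    cases a with
    | none => exact absurd rfl ha
    | some g =>
      cases b with
      | none => exact absurd rfl hb
      | some k => rfl
  · show (-1 : ℤˣ) * 1 = -1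
    decide
  · rintro a b ⟨ha0, ha1⟩ ⟨hb0, hb1⟩ c hc hc0
    cases a with
    | none => exact absurd rfl ha0
    | some ga =>
      cases b with
      | none => exact absurd rfl hb0
      | some gb =>
        cases c with
        | none => exact absurd rfl hc0
        | some gc =>
          refine ⟨hc0, ?_⟩
          rw [mem_Madd_ss h] at hc
          rcases hc with he | ⟨-, m, hm, hv⟩
          · exfalso
            have h2 := congrFun he x
            simp only [Pi.neg_apply] at h2
            have ha1' : ga.1 x = 1 := ha1
            have hb1' : gb.1 x = 1 := hb1
            rw [ha1', hb1'] at h2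
            exact absurd h2 (by decide)
          · cases Option.some_inj.mp hm
            have h1 : gc.1 x = ga.1 x ∨ gc.1 x = gb.1 x := hv x
            show gc.1 x = 1
            rcases h1 with h1 | h1 <;> rw [h1]
            · exact ha1
            · exact hb1

/-- The canonical map `X → Spec(M(G))`. -/
def alphaX (x : X) : {σ // σ ∈ XSet (MofAOS h)} := ⟨sigX x, sigX_mem h x⟩

lemma alphaX_surj (z : {σ // σ ∈ XSet (MofAOS h)}) : ∃ x, alphaX h x = z := by
  obtain ⟨σ, hσ⟩ := z
  have hmul : ∀ a b : {a : X → ℤˣ // a ∈ G},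
      σ (some ⟨a.1 * b.1, h.mul_mem a.2 b.2⟩) = σ (some a) * σ (some b) := by
    intro a b
    exact hσ.1.2 (some a) (some b) (Option.some_ne_none a) (Option.some_ne_none b)
  have hneg : σ (some ⟨fun _ => (-1 : ℤˣ), h.negone_mem⟩) = -1 := by
    have h1 := hσ.2.1
    have h2 : (MofAOS h).neg (MofAOS h).one = some ⟨fun _ => (-1 : ℤˣ), h.negone_mem⟩ := by
      rw [show (MofAOS h).one = some ⟨fun _ => 1, h.one_mem⟩ from rfl, Mneg_some h]
      exact congrArg some (Subtype.ext (funext fun y => by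
        show (-1 : ℤˣ) * 1 = -1; simp))
    rwa [h2] at h1
  have hclos : ∀ a b c : {a : X → ℤˣ // a ∈ G}, σ (some a) = 1 → σ (some b) = 1 →
      AOSValue a.1 b.1 c.1 → σ (some c) = 1 := by
    intro a b c ha hb hv
    have hmem : some c ∈ (MofAOS h).add (some a) (some b) := by
      rw [mem_Madd_ss h]
      by_cases he : a.1 = -b.1
      · exact Or.inl he
      · exact Or.inr ⟨he, c, rfl, hv⟩
    exact (hσ.2.2 (some a) (some b) ⟨Option.some_ne_none a, ha⟩ ⟨Option.some_ne_none b, hb⟩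
      (some c) hmem (Option.some_ne_none c)).2
  obtain ⟨x, hx⟩ := h.ax2 (fun g => σ (some g)) hmul hneg hclos
  refine ⟨x, Subtype.ext (funext fun o => ?_)⟩
  cases o with
  | none => exact hσ.1.1.symm
  | some g => exact (hx g).symm

lemma alphaX_inj : Function.Injective (alphaX h) := by
  intro x y he
  by_contra hxy
  obtain ⟨a, haG, hne⟩ := h.separates x y hxy
  apply hne
  have := congrFun (congrArg Subtype.val he) (some ⟨a, haG⟩)
  exact this

lemma alphaX_iso : IsAOSIso G (GSet (MofAOS h)) (alphaX h) := by
  have hmaps : ∀ k ∈ GSet (MofAOS h), k ∘ alphaX h ∈ G := by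
    rintro k ⟨f, hf, hfk⟩
    cases f with
    | none => exact absurd rfl hf
    | some g =>
      have he : k ∘ alphaX h = g.1 := funext fun x => hfk (alphaX h x)
      rw [he]
      exact g.2
  refine ⟨⟨alphaX_inj h, fun z => alphaX_surj h z⟩, hmaps, hmaps, ?_, ?_⟩
  · intro k₁ hk₁ k₂ hk₂ he
    funext z
    obtain ⟨x, rfl⟩ := alphaX_surj h z
    exact congrFun he x
  · intro g hg
    refine ⟨fun z => z.1 (some ⟨g, hg⟩), ⟨some ⟨g, hg⟩, Option.some_ne_none _, fun _ => rfl⟩, rfl⟩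

end MG3

section Part1
variable {X : Type x} {Y : Type y} {G : Set (X → ℤˣ)} {H : Set (Y → ℤˣ)}

lemma part1 (hG : IsAOS G) (hH : IsAOS H) (α : X → Y) (hα : IsAOSMorphism G H α) :
    IsMultiringHom (MofAOS hH) (MofAOS hG)
      (Option.map fun k : {a // a ∈ H} => (⟨k.1 ∘ α, hα k.1 k.2⟩ : {a // a ∈ G})) := by
  set F : {a // a ∈ H} → {a // a ∈ G} := fun k => ⟨k.1 ∘ α, hα k.1 k.2⟩ with hF
  constructor
  · -- map_add
    intro a b c hc
    cases a with
    | none =>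
      rw [mem_MaddNL hH] at hc; subst hc
      exact (mem_MaddNL hG).mpr rfl
    | some g =>
      cases b with
      | none =>
        rw [mem_MaddNR hH] at hc; subst hc
        exact (mem_MaddNR hG).mpr rfl
      | some k =>
        rw [mem_Madd_ss hH] at hc
        rcases hc with he | ⟨hne, m, hm, hv⟩
        · show _ ∈ (MofAOS hG).add (some (F g)) (some (F k))
          rw [mem_Madd_ss hG]
          refine Or.inl (funext fun x => ?_)
          show g.1 (α x) = -(k.1 (α x))
          exact congrFun he (α x)
        · subst hm
          show some (F m) ∈ (MofAOS hG).add (some (F g)) (some (F k))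
          rw [mem_Madd_ss hG]
          by_cases he2 : (F g).1 = -(F k).1
          · exact Or.inl he2
          · exact Or.inr ⟨he2, F m, rfl, fun x => hv (α x)⟩
  · -- map_neg
    intro a
    cases a with
    | none => rfl
    | some g =>
      show some (F (negG hH g)) = some (negG hG (F g))
      exact congrArg some (Subtype.ext (funext fun x => rfl))
  · rfl
  · -- map_mul
    intro a b
    cases a <;> cases b <;> rfl
  · -- map_one
    show some (F ⟨fun _ => 1, hH.one_mem⟩) = some ⟨fun _ => 1, hG.one_mem⟩
    exact congrArg some (Subtype.ext (funext fun x => rfl))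

end Part1
end AOSMF

/-- The contravariant functor `M` (sending a space of orderings `(X,G)` to the real reduced
multifield `M(G) = G ∪ {0}` and an AOS-morphism `α` to the extension of `h ↦ h ∘ α`) and the
functor `Spec` (sending a real reduced multifield `F` to its space of orderings) form an
equivalence: `M` sends morphisms to morphisms, `M(Spec F) ≅ F` for every real reduced
multifield `F`, and `Spec(M(G)) ≅ (X,G)` for every space of orderings `(X,G)`. -/
theorem aos_multifield_equivalence :
    (∀ (X Y : Type u) (G : Set (X → ℤˣ)) (H : Set (Y → ℤˣ))
        (hG : IsAOS G) (hH : IsAOS H) (α : X → Y) (hα : IsAOSMorphism G H α),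
        IsMultiringHom (MofAOS hH) (MofAOS hG)
          (Option.map fun k : {a // a ∈ H} => (⟨k.1 ∘ α, hα k.1 k.2⟩ : {a // a ∈ G}))) ∧
    (∀ (R : Type u) (A : MultiringData R), IsRealReducedMultifield A →
        IsAOS (GSet A) ∧
        ∀ h' : IsAOS (GSet A), IsMultiringIso A (MofAOS h') (canonMFtoMSpec A)) ∧
    (∀ (X : Type u) (G : Set (X → ℤˣ)) (h : IsAOS G),
        IsRealReducedMultifield (MofAOS h) ∧
        ∃ α : X → {σ // σ ∈ XSet (MofAOS h)},
          (∀ (x : X) (a : Option {a // a ∈ G}),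
            (α x).1 a = a.elim 1 (fun g => g.1 x)) ∧
          IsAOSIso G (GSet (MofAOS h)) α) := by
  refine ⟨?_, ?_, ?_⟩
  · intro X Y G H hG hH α hα
    exact AOSMF.part1 hG hH α hα
  · intro R A hF
    exact ⟨AOSMF.gset_aos hF, fun h' => AOSMF.canon_iso hF h'⟩
  · intro X G h
    exact ⟨AOSMF.mg_rrmf h, AOSMF.alphaX h, fun x a => rfl, AOSMF.alphaX_iso h⟩
end
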